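/- arXiv:2009.09620 — 2 statements merged into one kernel-verified Lean document; each statement's English description precedes it below -/
import Mathlib

section
/- Let φ(x) = Σ_{j=1}^n ±_j x_j^{m_j} with μ := min_j m_j ≥ 2, and define b_j(x) := ∂_{x_j}φ(x) / |∇φ(x)|². Then b_j is smooth on ℝⁿ ∖ {0}, and for every multi-index α there exists C_{j,α} > 0 such that |∂_x^α b_j(x)| ≤ C_{j,α} |x|^{-(μ-1)} for all x with |x_k| ≥ 1 for every k. -/
open Filter Topology Real MeasureTheory

noncomputable section

/-- The partial derivative in the `j`-th coordinate direction. -/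
def pd {n : ℕ} {F : Type*} [NormedAddCommGroup F] [NormedSpace ℝ F]
    (j : Fin n) (f : EuclideanSpace ℝ (Fin n) → F) : EuclideanSpace ℝ (Fin n) → F :=
  fun x => fderiv ℝ f x (EuclideanSpace.single j 1)

/-- The multi-index partial derivative `∂_x^α`. -/
def mpd {n : ℕ} {F : Type*} [NormedAddCommGroup F] [NormedSpace ℝ F]
    (α : Fin n → ℕ) (f : EuclideanSpace ℝ (Fin n) → F) : EuclideanSpace ℝ (Fin n) → F :=
  (List.finRange n).foldr (fun j g => (pd j)^[α j] g) f

end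

noncomputable section AuxStatement8

variable {n : ℕ}

def den (m : Fin n → ℕ) (ε : Fin n → ℝ) (x : EuclideanSpace ℝ (Fin n)) : ℝ :=
  ∑ k, (ε k * (m k : ℝ) * x k ^ (m k - 1)) ^ 2

def mono (a : Fin n → ℕ) (x : EuclideanSpace ℝ (Fin n)) : ℝ := ∏ k, x k ^ a k

def trm (m : Fin n → ℕ) (ε : Fin n → ℝ) (t : ℝ × (Fin n → ℕ) × ℕ)
    (x : EuclideanSpace ℝ (Fin n)) : ℝ :=
  t.1 * mono t.2.1 x * ((den m ε x)⁻¹) ^ t.2.2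

def evalL (m : Fin n → ℕ) (ε : Fin n → ℝ) (L : List (ℝ × (Fin n → ℕ) × ℕ))
    (x : EuclideanSpace ℝ (Fin n)) : ℝ :=
  (L.map (fun t => trm m ε t x)).sum

def step (m : Fin n → ℕ) (i : Fin n) (t : ℝ × (Fin n → ℕ) × ℕ) :
    List (ℝ × (Fin n → ℕ) × ℕ) :=
  [ (t.1 * (t.2.1 i : ℝ), Function.update t.2.1 i (t.2.1 i - 1), t.2.2),
    (-(t.1 * (t.2.2 : ℝ) * (2 * (m i : ℝ) ^ 2 * ((m i : ℝ) - 1))),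
      Function.update t.2.1 i (t.2.1 i + (2 * (m i - 1) - 1)), t.2.2 + 1) ]

def stepL (m : Fin n → ℕ) (i : Fin n) (L : List (ℝ × (Fin n → ℕ) × ℕ)) :
    List (ℝ × (Fin n → ℕ) × ℕ) := L.flatMap (step m i)

def sig (m : Fin n → ℕ) (a : Fin n → ℕ) : ℝ := ∑ k, (a k : ℝ) / (2 * ((m k : ℝ) - 1))

def GoodL (m : Fin n → ℕ) (L : List (ℝ × (Fin n → ℕ) × ℕ)) : Prop :=
  ∀ t ∈ L, sig m t.2.1 + 1/2 ≤ (t.2.2 : ℝ)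

lemma mono_update (a : Fin n → ℕ) (i : Fin n) (b : ℕ) (x : EuclideanSpace ℝ (Fin n)) :
    mono (Function.update a i b) x = x i ^ b * ∏ k ∈ Finset.univ.erase i, x k ^ a k := by
  rw [mono, ← Finset.mul_prod_erase Finset.univ _ (Finset.mem_univ i)]
  rw [Function.update_self]
  congr 1
  exact Finset.prod_congr rfl fun k hk => by
    rw [Function.update_of_ne (Finset.ne_of_mem_erase hk)]

lemma mono_split (a : Fin n → ℕ) (i : Fin n) (x : EuclideanSpace ℝ (Fin n)) :
    mono a x = x i ^ a i * ∏ k ∈ Finset.univ.erase i, x k ^ a k := by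
  rw [mono, ← Finset.mul_prod_erase Finset.univ _ (Finset.mem_univ i)]

lemma den_pos (m : Fin n → ℕ) (ε : Fin n → ℝ) (hm2 : ∀ k, 2 ≤ m k)
    (hε : ∀ k, ε k = 1 ∨ ε k = -1) {x : EuclideanSpace ℝ (Fin n)} (hx : x ≠ 0) :
    0 < den m ε x := by
  have : ∃ k, x k ≠ 0 := by
    by_contra h
    push_neg at h
    exact hx (by ext k; exact h k)
  obtain ⟨k, hk⟩ := this
  apply Finset.sum_pos' (fun k _ => sq_nonneg _) ⟨k, Finset.mem_univ k, ?_⟩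
  have hε' : ε k ≠ 0 := by rcases hε k with h | h <;> simp [h]
  have hm' : (m k : ℝ) ≠ 0 := by
    have := hm2 k; positivity
  positivity

lemma mono_diff (a : Fin n → ℕ) (i : Fin n) (x : EuclideanSpace ℝ (Fin n)) :
    ∃ Φ : EuclideanSpace ℝ (Fin n) →L[ℝ] ℝ, HasFDerivAt (mono a) Φ x ∧
      Φ (EuclideanSpace.single i 1) = (a i : ℝ) * mono (Function.update a i (a i - 1)) x := by
  classical
  have hco : ∀ k : Fin n, HasFDerivAt (fun y : EuclideanSpace ℝ (Fin n) => y k ^ a k)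
      (((a k : ℝ) * x k ^ (a k - 1)) • (EuclideanSpace.proj k : EuclideanSpace ℝ (Fin n) →L[ℝ] ℝ)) x := by
    intro k
    have h1 : HasFDerivAt (fun y : EuclideanSpace ℝ (Fin n) => y k) (EuclideanSpace.proj k :
        EuclideanSpace ℝ (Fin n) →L[ℝ] ℝ) x :=
      (EuclideanSpace.proj k : EuclideanSpace ℝ (Fin n) →L[ℝ] ℝ).hasFDerivAt
    have := (hasDerivAt_pow (a k) (x k)).comp_hasFDerivAt x h1
    exact this
  have h := HasFDerivAt.finset_prod (u := Finset.univ)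
    (g := fun k (y : EuclideanSpace ℝ (Fin n)) => y k ^ a k)
    (g' := fun k => ((a k : ℝ) * x k ^ (a k - 1)) • (EuclideanSpace.proj k : EuclideanSpace ℝ (Fin n) →L[ℝ] ℝ))
    (fun k _ => hco k)
  refine ⟨_, h, ?_⟩
  rw [ContinuousLinearMap.sum_apply]
  rw [Finset.sum_eq_single i]
  · rw [mono_update]
    simp [EuclideanSpace.single_apply]
    ring
  · intro k _ hk
    simp [EuclideanSpace.single_apply, hk]
  · simp

lemma den_diff (m : Fin n → ℕ) (ε : Fin n → ℝ) (hm2 : ∀ k, 2 ≤ m k)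
    (hε : ∀ k, ε k = 1 ∨ ε k = -1) (i : Fin n) (x : EuclideanSpace ℝ (Fin n)) :
    ∃ Φ : EuclideanSpace ℝ (Fin n) →L[ℝ] ℝ, HasFDerivAt (den m ε) Φ x ∧
      Φ (EuclideanSpace.single i 1)
        = 2 * (m i : ℝ) ^ 2 * ((m i : ℝ) - 1) * x i ^ (2 * (m i - 1) - 1) := by
  classical
  have hterm : ∀ k : Fin n, HasFDerivAt
      (fun y : EuclideanSpace ℝ (Fin n) => (ε k * (m k : ℝ) * y k ^ (m k - 1)) ^ 2)
      ((2 * (ε k * (m k : ℝ) * x k ^ (m k - 1)) *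
         (ε k * (m k : ℝ) * (((m k - 1 : ℕ) : ℝ) * x k ^ (m k - 1 - 1)))) •
        (EuclideanSpace.proj k : EuclideanSpace ℝ (Fin n) →L[ℝ] ℝ)) x := by
    intro k
    have h1 : HasFDerivAt (fun y : EuclideanSpace ℝ (Fin n) => y k) (EuclideanSpace.proj k :
        EuclideanSpace ℝ (Fin n) →L[ℝ] ℝ) x :=
      (EuclideanSpace.proj k : EuclideanSpace ℝ (Fin n) →L[ℝ] ℝ).hasFDerivAt
    have h2 := (hasDerivAt_pow (m k - 1) (x k)).comp_hasFDerivAt x h1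
    have h3 := h2.const_mul (ε k * (m k : ℝ))
    have h4 := (hasDerivAt_pow 2 (ε k * (m k : ℝ) * x k ^ (m k - 1))).comp_hasFDerivAt x h3
    have := h4
    simp only [pow_one, Nat.cast_ofNat] at this ⊢
    refine this.congr_fderiv ?_
    rw [smul_smul, smul_smul]
    ring_nf
  have h := HasFDerivAt.fun_sum (u := Finset.univ) (fun k _ => hterm k)
  refine ⟨_, h, ?_⟩
  rw [ContinuousLinearMap.sum_apply]
  rw [Finset.sum_eq_single i]
  · have hε2 : ε i ^ 2 = 1 := by rcases hε i with h' | h' <;> simp [h']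
    have hm1 : (1 : ℕ) ≤ m i - 1 := by have := hm2 i; omega
    have hcast : ((m i - 1 : ℕ) : ℝ) = (m i : ℝ) - 1 := by
      have := hm2 i; push_cast [Nat.cast_sub (by omega : 1 ≤ m i)]; ring
    have hpow : x i ^ (m i - 1) * x i ^ (m i - 1 - 1) = x i ^ (2 * (m i - 1) - 1) := by
      rw [← pow_add]; congr 1; omega
    simp only [EuclideanSpace.single_apply, if_pos rfl, ContinuousLinearMap.smul_apply]
    have : (EuclideanSpace.proj i : EuclideanSpace ℝ (Fin n) →L[ℝ] ℝ)
        (EuclideanSpace.single i 1) = 1 := by simp [EuclideanSpace.single_apply]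
    rw [this, smul_eq_mul, mul_one, hcast]
    have hee : ε i * ε i = 1 := by nlinarith [hε2]
    have e : 2 * (ε i * (m i : ℝ) * x i ^ (m i - 1)) *
        (ε i * (m i : ℝ) * (((m i : ℝ) - 1) * x i ^ (m i - 1 - 1)))
        = (ε i * ε i) * (2 * (m i : ℝ) ^ 2 * ((m i : ℝ) - 1) *
          (x i ^ (m i - 1) * x i ^ (m i - 1 - 1))) := by ring
    rw [e, hee, one_mul, hpow]
  · intro k _ hk
    have : (EuclideanSpace.proj k : EuclideanSpace ℝ (Fin n) →L[ℝ] ℝ)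
        (EuclideanSpace.single i 1) = 0 := by
      simp [EuclideanSpace.single_apply, hk]
    simp [this]
  · simp

lemma trm_diff (m : Fin n → ℕ) (ε : Fin n → ℝ) (hm2 : ∀ k, 2 ≤ m k)
    (hε : ∀ k, ε k = 1 ∨ ε k = -1) (i : Fin n) (t : ℝ × (Fin n → ℕ) × ℕ)
    {x : EuclideanSpace ℝ (Fin n)} (hx : x ≠ 0) :
    ∃ Φ : EuclideanSpace ℝ (Fin n) →L[ℝ] ℝ, HasFDerivAt (trm m ε t) Φ x ∧
      Φ (EuclideanSpace.single i 1) = evalL m ε (step m i t) x := by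
  classical
  obtain ⟨c, a, N⟩ := t
  have hd : den m ε x ≠ 0 := (den_pos m ε hm2 hε hx).ne'
  obtain ⟨Φm, hΦm, hvm⟩ := mono_diff a i x
  obtain ⟨Φd, hΦd, hvd⟩ := den_diff m ε hm2 hε i x
  have hinv : HasDerivAt (fun y : ℝ => (y⁻¹) ^ N)
      ((N : ℝ) * ((den m ε x)⁻¹) ^ (N - 1) * (-((den m ε x) ^ 2)⁻¹)) (den m ε x) :=
    (hasDerivAt_inv hd).pow N
  have hI := hinv.comp_hasFDerivAt x hΦd
  have hmul := (hΦm.const_mul c).mul hI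
  refine ⟨_, hmul, ?_⟩
  simp only [ContinuousLinearMap.add_apply, ContinuousLinearMap.smul_apply, smul_eq_mul,
      hvm, hvd, Function.comp_apply]
  have hsplit : mono (Function.update a i (a i + (2 * (m i - 1) - 1))) x
      = mono a x * x i ^ (2 * (m i - 1) - 1) := by
    rw [mono_update, mono_split a i x, pow_add]; ring
  simp only [evalL, step, List.map_cons, List.map_nil, List.sum_cons, List.sum_nil, add_zero,
      trm]
  rw [hsplit]
  rcases N with _ | N'
  · simp; ring
  · have hpow : ((den m ε x)⁻¹) ^ (N' + 1 - 1) * ((den m ε x) ^ 2)⁻¹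
        = ((den m ε x)⁻¹) ^ (N' + 1 + 1) := by
      rw [show ((den m ε x) ^ 2)⁻¹ = ((den m ε x)⁻¹) ^ 2 from (inv_pow _ 2).symm, ← pow_add]
      congr 1
    rw [show N' + 1 - 1 = N' from rfl] at *
    push_cast
    rw [← hpow]
    ring

theorem evalL_diff (m : Fin n → ℕ) (ε : Fin n → ℝ) (hm2 : ∀ k, 2 ≤ m k)
    (hε : ∀ k, ε k = 1 ∨ ε k = -1) (i : Fin n) (L : List (ℝ × (Fin n → ℕ) × ℕ))
    {x : EuclideanSpace ℝ (Fin n)} (hx : x ≠ 0) :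
    ∃ Φ : EuclideanSpace ℝ (Fin n) →L[ℝ] ℝ, HasFDerivAt (evalL m ε L) Φ x ∧
      Φ (EuclideanSpace.single i 1) = evalL m ε (stepL m i L) x := by
  induction L with
  | nil => exact ⟨0, by rw [show evalL m ε [] = fun _ => (0:ℝ) from funext fun y => by simp [evalL]]; exact hasFDerivAt_const (0:ℝ) x, by simp [evalL, stepL]⟩
  | cons t L ih =>
    obtain ⟨Φt, ht, hvt⟩ := trm_diff m ε hm2 hε i t hx
    obtain ⟨ΦL, hL, hvL⟩ := ih
    refine ⟨Φt + ΦL, ?_, ?_⟩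
    · have : evalL m ε (t :: L) = fun y => trm m ε t y + evalL m ε L y := by
        funext y; simp [evalL]
      rw [this]; exact ht.add hL
    · simp only [ContinuousLinearMap.add_apply, hvt, hvL, stepL, List.flatMap_cons, evalL,
        List.map_append, List.sum_append]

theorem pd_evalL (m : Fin n → ℕ) (ε : Fin n → ℝ) (hm2 : ∀ k, 2 ≤ m k)
    (hε : ∀ k, ε k = 1 ∨ ε k = -1) (i : Fin n) (L : List (ℝ × (Fin n → ℕ) × ℕ))
    {x : EuclideanSpace ℝ (Fin n)} (hx : x ≠ 0) :
    pd i (evalL m ε L) x = evalL m ε (stepL m i L) x := by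
  obtain ⟨Φ, hΦ, hv⟩ := evalL_diff m ε hm2 hε i L hx
  rw [pd, hΦ.fderiv, hv]

theorem pd_congr {f g : EuclideanSpace ℝ (Fin n) → ℝ} (i : Fin n)
    (h : ∀ y : EuclideanSpace ℝ (Fin n), y ≠ 0 → f y = g y)
    {x : EuclideanSpace ℝ (Fin n)} (hx : x ≠ 0) : pd i f x = pd i g x := by
  have hev : f =ᶠ[nhds x] g :=
    Filter.eventually_of_mem (isOpen_compl_singleton.mem_nhds hx) (fun y hy => h y hy)
  rw [pd, pd, hev.fderiv_eq]

theorem good_step (m : Fin n → ℕ) (hm2 : ∀ k, 2 ≤ m k) (i : Fin n)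
    (L : List (ℝ × (Fin n → ℕ) × ℕ)) (hL : GoodL m L) : GoodL m (stepL m i L) := by
  intro t' ht'
  rw [stepL, List.mem_flatMap] at ht'
  obtain ⟨t, htL, hmem⟩ := ht'
  have hgood := hL t htL
  have hM : (0:ℝ) < 2 * ((m i : ℝ) - 1) := by
    have := hm2 i
    have : (2:ℝ) ≤ (m i : ℝ) := by exact_mod_cast this
    linarith
  have hsum : ∀ b : ℕ, sig m (Function.update t.2.1 i b)
      = (b : ℝ) / (2 * ((m i : ℝ) - 1)) + ∑ k ∈ Finset.univ.erase i, (t.2.1 k : ℝ) / (2 * ((m k : ℝ) - 1)) := by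
    intro b
    rw [sig, ← Finset.add_sum_erase _ _ (Finset.mem_univ i), Function.update_self]
    congr 1
    exact Finset.sum_congr rfl fun k hk => by
      rw [Function.update_of_ne (Finset.ne_of_mem_erase hk)]
  have hsig : sig m t.2.1 = (t.2.1 i : ℝ) / (2 * ((m i : ℝ) - 1))
      + ∑ k ∈ Finset.univ.erase i, (t.2.1 k : ℝ) / (2 * ((m k : ℝ) - 1)) := by
    rw [sig, ← Finset.add_sum_erase _ _ (Finset.mem_univ i)]
  simp only [step, List.mem_cons, List.mem_singleton] at hmem
  rcases hmem with h1 | h2 | h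
  · subst h1
    simp only
    rw [hsum]
    have hle : ((t.2.1 i - 1 : ℕ) : ℝ) ≤ (t.2.1 i : ℝ) := by exact_mod_cast Nat.sub_le _ _
    have hd : ((t.2.1 i - 1 : ℕ) : ℝ) / (2 * ((m i : ℝ) - 1)) ≤ (t.2.1 i : ℝ) / (2 * ((m i : ℝ) - 1)) :=
      (div_le_div_iff_of_pos_right hM).mpr hle
    have := hsig ▸ hgood
    linarith
  · subst h2
    simp only
    rw [hsum]
    have hcast : ((t.2.1 i + (2 * (m i - 1) - 1) : ℕ) : ℝ)
        = (t.2.1 i : ℝ) + (2 * ((m i : ℝ) - 1) - 1) := by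
      have h1 : 1 ≤ m i := by have := hm2 i; omega
      have h2 : 1 ≤ 2 * (m i - 1) := by have := hm2 i; omega
      push_cast [Nat.cast_sub h2, Nat.cast_sub h1]
      ring
    rw [hcast]
    have hfrac : (2 * ((m i : ℝ) - 1) - 1) / (2 * ((m i : ℝ) - 1)) ≤ 1 := by
      rw [div_le_one hM]; linarith
    have := hsig ▸ hgood
    push_cast
    rw [add_div]
    linarith
  · exact absurd h (by simp)

theorem rep_iter (m : Fin n → ℕ) (ε : Fin n → ℝ) (hm2 : ∀ k, 2 ≤ m k)
    (hε : ∀ k, ε k = 1 ∨ ε k = -1) (i : Fin n) :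
    ∀ (q : ℕ) (f : EuclideanSpace ℝ (Fin n) → ℝ) (L : List (ℝ × (Fin n → ℕ) × ℕ)),
      GoodL m L → (∀ y, y ≠ 0 → f y = evalL m ε L y) →
      ∃ L', GoodL m L' ∧ ∀ y, y ≠ 0 → ((pd i)^[q] f) y = evalL m ε L' y := by
  intro q
  induction q with
  | zero => intro f L hG hf; exact ⟨L, hG, by simpa using hf⟩
  | succ q ihq =>
    intro f L hG hf
    have hstep : ∀ y, y ≠ (0 : EuclideanSpace ℝ (Fin n)) →
        pd i f y = evalL m ε (stepL m i L) y := by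
      intro y hy
      rw [pd_congr i hf hy, pd_evalL m ε hm2 hε i L hy]
    have := ihq (pd i f) (stepL m i L) (good_step m hm2 i L hG) hstep
    simpa [Function.iterate_succ_apply] using this

theorem rep_foldr (m : Fin n → ℕ) (ε : Fin n → ℝ) (hm2 : ∀ k, 2 ≤ m k)
    (hε : ∀ k, ε k = 1 ∨ ε k = -1) (α : Fin n → ℕ) (l : List (Fin n)) :
    ∀ (f : EuclideanSpace ℝ (Fin n) → ℝ) (L : List (ℝ × (Fin n → ℕ) × ℕ)),
      GoodL m L → (∀ y, y ≠ 0 → f y = evalL m ε L y) →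
      ∃ L', GoodL m L' ∧ ∀ y, y ≠ 0 →
        (l.foldr (fun j g => (pd j)^[α j] g) f) y = evalL m ε L' y := by
  induction l with
  | nil => intro f L hG hf; exact ⟨L, hG, hf⟩
  | cons j l ih =>
    intro f L hG hf
    obtain ⟨L', hG', hf'⟩ := ih f L hG hf
    obtain ⟨L'', hG'', hf''⟩ := rep_iter m ε hm2 hε j (α j)
      (l.foldr (fun j g => (pd j)^[α j] g) f) L' hG' hf'
    exact ⟨L'', hG'', by simpa using hf''⟩

lemma rpow_finset_sum {D : ℝ} (hD : 0 < D) {ι : Type*} (s : Finset ι) (e : ι → ℝ) :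
    D ^ (∑ k ∈ s, e k) = ∏ k ∈ s, D ^ e k := by
  classical
  induction s using Finset.induction with
  | empty => simp
  | insert a s h ih => rw [Finset.sum_insert h, Finset.prod_insert h, Real.rpow_add hD, ih]

theorem trm_bound (m : Fin n → ℕ) (ε : Fin n → ℝ) (hn : 1 ≤ n) (hm2 : ∀ k, 2 ≤ m k)
    (hε : ∀ k, ε k = 1 ∨ ε k = -1) (μ : ℕ) (hμ2 : 2 ≤ μ) (hμle : ∀ k, μ ≤ m k)
    (t : ℝ × (Fin n → ℕ) × ℕ) (ht : sig m t.2.1 + 1/2 ≤ (t.2.2 : ℝ))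
    (x : EuclideanSpace ℝ (Fin n)) (hx : ∀ k, 1 ≤ |x k|) :
    |trm m ε t x| ≤ |t.1| * (n : ℝ) ^ (((μ : ℝ) - 1)/2) * ‖x‖ ^ (-((μ : ℝ) - 1)) := by
  classical
  obtain ⟨c, a, N⟩ := t
  set D := den m ε x with hDdef
  have hk0 : Fin n := ⟨0, hn⟩
  have h1 : ∀ k, |x k| ^ (2 * (m k - 1)) ≤ D := by
    intro k
    have habs : |x k| ^ (2 * (m k - 1)) = (x k ^ (m k - 1)) ^ 2 := by
      rw [mul_comm 2 (m k - 1), pow_mul, ← abs_pow, sq_abs]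
    have hterm : (x k ^ (m k - 1)) ^ 2 ≤ (ε k * (m k : ℝ) * x k ^ (m k - 1)) ^ 2 := by
      have hε2 : (ε k) ^ 2 = 1 := by rcases hε k with h | h <;> simp [h]
      have hm : (2:ℝ) ≤ (m k : ℝ) := by exact_mod_cast hm2 k
      have : (ε k * (m k : ℝ) * x k ^ (m k - 1)) ^ 2
          = (ε k) ^ 2 * (m k : ℝ) ^ 2 * (x k ^ (m k - 1)) ^ 2 := by ring
      rw [this, hε2, one_mul]
      have h1m : (1:ℝ) ≤ (m k : ℝ) ^ 2 := by nlinarith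
      nlinarith [sq_nonneg (x k ^ (m k - 1))]
    have hsum : (ε k * (m k : ℝ) * x k ^ (m k - 1)) ^ 2 ≤ D := by
      exact Finset.single_le_sum (f := fun k => (ε k * (m k : ℝ) * x k ^ (m k - 1)) ^ 2)
        (fun k _ => sq_nonneg _) (Finset.mem_univ k)
    rw [habs]; linarith
  have hD1 : (1:ℝ) ≤ D := by
    refine le_trans ?_ (h1 hk0)
    have := pow_le_pow_left₀ (by norm_num : (0:ℝ) ≤ 1) (hx hk0) (2 * (m hk0 - 1))
    simpa using this
  have hDpos : (0:ℝ) < D := lt_of_lt_of_le one_pos hD1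
  have hmono : |mono a x| ≤ D ^ (sig m a) := by
    have habs : |mono a x| = ∏ k, |x k| ^ a k := by
      rw [mono, Finset.abs_prod]
      exact Finset.prod_congr rfl fun k _ => abs_pow _ _
    rw [habs, sig, rpow_finset_sum hDpos]
    refine Finset.prod_le_prod (fun k _ => by positivity) (fun k _ => ?_)
    have hMk : (0:ℝ) < 2 * ((m k : ℝ) - 1) := by
      have : (2:ℝ) ≤ (m k : ℝ) := by exact_mod_cast hm2 k
      linarith
    have hcast : ((2 * (m k - 1) : ℕ) : ℝ) = 2 * ((m k : ℝ) - 1) := by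
      have h1' : 1 ≤ m k := by have := hm2 k; omega
      push_cast [Nat.cast_sub h1']
      ring
    have key : |x k| ^ (a k : ℕ) = (|x k| ^ ((2 * (m k - 1) : ℕ) : ℝ)) ^ ((a k : ℝ) / (2 * ((m k : ℝ) - 1))) := by
      rw [← Real.rpow_natCast (|x k|) (a k), ← Real.rpow_mul (abs_nonneg _), hcast]
      congr 1
      have hne : (m k : ℝ) - 1 ≠ 0 := by linarith
      field_simp
    rw [key]
    refine Real.rpow_le_rpow (by positivity) ?_ (by positivity)
    rw [Real.rpow_natCast]
    exact h1 k
  have hinv : ((D)⁻¹) ^ N = D ^ (-(N : ℝ)) := by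
    rw [Real.rpow_neg hDpos.le, Real.rpow_natCast, inv_pow]
  have htrm : |trm m ε (c, a, N) x| ≤ |c| * D ^ (-(1/2) : ℝ) := by
    have : |trm m ε (c, a, N) x| = |c| * |mono a x| * ((D)⁻¹) ^ N := by
      rw [trm, abs_mul, abs_mul, abs_pow, abs_inv, abs_of_pos hDpos]
    rw [this, hinv]
    calc |c| * |mono a x| * D ^ (-(N:ℝ))
        ≤ |c| * D ^ (sig m a) * D ^ (-(N:ℝ)) :=
          mul_le_mul_of_nonneg_right (mul_le_mul_of_nonneg_left hmono (abs_nonneg c))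
            (by positivity)
      _ = |c| * D ^ (sig m a + -(N:ℝ)) := by rw [mul_assoc, ← Real.rpow_add hDpos]
      _ ≤ |c| * D ^ (-(1/2) : ℝ) := by
          have : sig m a + -(N:ℝ) ≤ -(1/2) := by simp only at ht; linarith
          exact mul_le_mul_of_nonneg_left (Real.rpow_le_rpow_of_exponent_le hD1 this) (abs_nonneg c)
  have he0 : (0:ℝ) ≤ (μ:ℝ) - 1 := by
    have : (2:ℝ) ≤ (μ:ℝ) := by exact_mod_cast hμ2
    linarith
  obtain ⟨K, _, hK⟩ := Finset.exists_max_image (Finset.univ : Finset (Fin n))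
    (fun k => |x k|) ⟨hk0, Finset.mem_univ hk0⟩
  have hxK : ‖x‖ ≤ Real.sqrt n * |x K| := by
    rw [EuclideanSpace.norm_eq]
    have hsum : ∑ k, ‖x k‖ ^ 2 ≤ (n : ℝ) * |x K| ^ 2 := by
      calc ∑ k, ‖x k‖ ^ 2 ≤ ∑ _k : Fin n, |x K| ^ 2 := by
            refine Finset.sum_le_sum fun k _ => ?_
            rw [Real.norm_eq_abs]
            exact pow_le_pow_left₀ (abs_nonneg _) (hK k (Finset.mem_univ k)) 2
        _ = (n : ℝ) * |x K| ^ 2 := by simp [Finset.sum_const, nsmul_eq_mul]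
    calc Real.sqrt (∑ k, ‖x k‖ ^ 2) ≤ Real.sqrt ((n:ℝ) * |x K| ^ 2) := Real.sqrt_le_sqrt hsum
      _ = Real.sqrt n * |x K| := by
          rw [Real.sqrt_mul (by positivity), Real.sqrt_sq (abs_nonneg _)]
  have hKD : |x K| ^ ((μ:ℝ) - 1) ≤ D ^ ((1:ℝ)/2) := by
    have hstep1 : |x K| ^ ((μ:ℝ) - 1) ≤ |x K| ^ (((m K - 1 : ℕ)) : ℝ) := by
      refine Real.rpow_le_rpow_of_exponent_le (hx K) ?_
      have h1' : 1 ≤ m K := by have := hm2 K; omega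
      have : (μ : ℝ) ≤ (m K : ℝ) := by exact_mod_cast hμle K
      rw [Nat.cast_sub h1']
      push_cast
      linarith
    have hsq : (|x K| ^ (m K - 1 : ℕ)) ^ 2 ≤ D := by
      rw [← pow_mul, mul_comm (m K - 1) 2]
      exact h1 K
    have hle : |x K| ^ (m K - 1 : ℕ) ≤ D ^ ((1:ℝ)/2) := by
      rw [← Real.sqrt_eq_rpow]
      calc |x K| ^ (m K - 1) = Real.sqrt ((|x K| ^ (m K - 1)) ^ 2) :=
            (Real.sqrt_sq (by positivity)).symm
        _ ≤ Real.sqrt D := Real.sqrt_le_sqrt hsq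
    calc |x K| ^ ((μ:ℝ) - 1) ≤ |x K| ^ (((m K - 1 : ℕ)) : ℝ) := hstep1
      _ = |x K| ^ (m K - 1 : ℕ) := Real.rpow_natCast _ _
      _ ≤ D ^ ((1:ℝ)/2) := hle
  have hnorm : ‖x‖ ^ ((μ:ℝ) - 1) ≤ (n : ℝ) ^ (((μ:ℝ) - 1)/2) * D ^ ((1:ℝ)/2) := by
    calc ‖x‖ ^ ((μ:ℝ) - 1) ≤ (Real.sqrt n * |x K|) ^ ((μ:ℝ) - 1) :=
          Real.rpow_le_rpow (norm_nonneg x) hxK he0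
      _ = (Real.sqrt n) ^ ((μ:ℝ) - 1) * |x K| ^ ((μ:ℝ) - 1) :=
          Real.mul_rpow (Real.sqrt_nonneg _) (abs_nonneg _)
      _ = (n:ℝ) ^ (((μ:ℝ) - 1)/2) * |x K| ^ ((μ:ℝ) - 1) := by
          rw [Real.sqrt_eq_rpow, ← Real.rpow_mul (by positivity)]
          ring_nf
      _ ≤ (n:ℝ) ^ (((μ:ℝ) - 1)/2) * D ^ ((1:ℝ)/2) :=
          mul_le_mul_of_nonneg_left hKD (by positivity)
  have hxpos : (0:ℝ) < ‖x‖ := by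
    have habs_le : |x hk0| ≤ ‖x‖ := by
      rw [EuclideanSpace.norm_eq]
      have hs : |x hk0| ^ 2 ≤ ∑ k, ‖x k‖ ^ 2 := by
        have := Finset.single_le_sum (f := fun k => ‖x k‖ ^ 2)
          (fun k _ => by positivity) (Finset.mem_univ hk0)
        simpa [Real.norm_eq_abs] using this
      calc |x hk0| = Real.sqrt (|x hk0| ^ 2) := (Real.sqrt_sq (abs_nonneg _)).symm
        _ ≤ Real.sqrt (∑ k, ‖x k‖ ^ 2) := Real.sqrt_le_sqrt hs
    linarith [hx hk0]
  have hA : (0:ℝ) < ‖x‖ ^ ((μ:ℝ) - 1) := Real.rpow_pos_of_pos hxpos _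
  rw [Real.rpow_neg (norm_nonneg x), ← div_eq_mul_inv, le_div_iff₀ hA]
  calc |trm m ε (c, a, N) x| * ‖x‖ ^ ((μ:ℝ) - 1)
      ≤ (|c| * D ^ (-(1/2):ℝ)) * ((n:ℝ) ^ (((μ:ℝ) - 1)/2) * D ^ ((1:ℝ)/2)) :=
        mul_le_mul htrm hnorm (by positivity) (by positivity)
    _ = |c| * (n:ℝ) ^ (((μ:ℝ) - 1)/2) * (D ^ (-(1/2):ℝ) * D ^ ((1:ℝ)/2)) := by ring
    _ = |(c, a, N).1| * (n:ℝ) ^ (((μ:ℝ) - 1)/2) := by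
        rw [← Real.rpow_add hDpos]
        norm_num

theorem evalL_bound (m : Fin n → ℕ) (ε : Fin n → ℝ) (hn : 1 ≤ n) (hm2 : ∀ k, 2 ≤ m k)
    (hε : ∀ k, ε k = 1 ∨ ε k = -1) (μ : ℕ) (hμ2 : 2 ≤ μ) (hμle : ∀ k, μ ≤ m k)
    (L : List (ℝ × (Fin n → ℕ) × ℕ)) (hG : GoodL m L)
    (x : EuclideanSpace ℝ (Fin n)) (hx : ∀ k, 1 ≤ |x k|) :
    |evalL m ε L x| ≤ (L.map (fun t => |t.1|)).sum * (n : ℝ) ^ (((μ : ℝ) - 1)/2)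
      * ‖x‖ ^ (-((μ : ℝ) - 1)) := by
  induction L with
  | nil => simp [evalL]
  | cons t L ih =>
    have hGt := hG t List.mem_cons_self
    have hGL : GoodL m L := fun u hu => hG u (List.mem_cons_of_mem t hu)
    have h1 := trm_bound m ε hn hm2 hε μ hμ2 hμle t hGt x hx
    have h2 := ih hGL
    have habs : |evalL m ε (t :: L) x| ≤ |trm m ε t x| + |evalL m ε L x| := by
      simp only [evalL, List.map_cons, List.sum_cons]
      exact abs_add_le _ _
    simp only [List.map_cons, List.sum_cons]
    calc |evalL m ε (t :: L) x| ≤ |trm m ε t x| + |evalL m ε L x| := habs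
      _ ≤ |t.1| * (n : ℝ) ^ (((μ : ℝ) - 1)/2) * ‖x‖ ^ (-((μ : ℝ) - 1))
          + (L.map (fun t => |t.1|)).sum * (n : ℝ) ^ (((μ : ℝ) - 1)/2) * ‖x‖ ^ (-((μ : ℝ) - 1)) :=
          add_le_add h1 h2
      _ = (|t.1| + (L.map (fun t => |t.1|)).sum) * (n : ℝ) ^ (((μ : ℝ) - 1)/2)
          * ‖x‖ ^ (-((μ : ℝ) - 1)) := by ring

end AuxStatement8

/-- With `φ(x) = Σ_j ±_j x_j^{m_j}`, `μ = min_j m_j ≥ 2` and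
`b_j = ∂_{x_j}φ / |∇φ|²`, each `b_j` is smooth on `ℝⁿ ∖ {0}` and for every multi-index `α`
there is `C_{j,α} > 0` with `|∂_x^α b_j(x)| ≤ C_{j,α}|x|^{-(μ-1)}` whenever `|x_k| ≥ 1`
for every `k`. -/
theorem b_j_smooth_and_deriv_bounds
    (n : ℕ) (hn : 1 ≤ n) (m : Fin n → ℕ) (ε : Fin n → ℝ) (hε : ∀ j, ε j = 1 ∨ ε j = -1)
    (μ : ℕ) (hμ2 : 2 ≤ μ) (hμle : ∀ j, μ ≤ m j) (hμmem : ∃ j, m j = μ)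
    (b : Fin n → EuclideanSpace ℝ (Fin n) → ℝ)
    (hb : ∀ j x, b j x =
      (ε j * (m j : ℝ) * x j ^ (m j - 1)) /
        (∑ k, (ε k * (m k : ℝ) * x k ^ (m k - 1)) ^ 2)) :
    ∀ j : Fin n,
      ContDiffOn ℝ (⊤ : ℕ∞) (b j) ({0}ᶜ : Set (EuclideanSpace ℝ (Fin n))) ∧
      ∀ α : Fin n → ℕ, ∃ C : ℝ, 0 < C ∧
        ∀ x : EuclideanSpace ℝ (Fin n), (∀ k, 1 ≤ |x k|) →
          ‖mpd α (b j) x‖ ≤ C * ‖x‖ ^ (-((μ : ℝ) - 1)) := by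
  classical
  have hm2 : ∀ k, 2 ≤ m k := fun k => le_trans hμ2 (hμle k)
  intro j
  constructor
  · -- smoothness
    have hbfun : b j = fun x => (ε j * (m j : ℝ) * x j ^ (m j - 1)) / den m ε x :=
      funext (hb j)
    rw [hbfun]
    have hproj : ∀ k : Fin n, ContDiff ℝ (⊤ : ℕ∞) (fun x : EuclideanSpace ℝ (Fin n) => x k) :=
      fun k => (EuclideanSpace.proj k : EuclideanSpace ℝ (Fin n) →L[ℝ] ℝ).contDiff
    have hnum : ContDiff ℝ (⊤ : ℕ∞) (fun x : EuclideanSpace ℝ (Fin n) =>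
        ε j * (m j : ℝ) * x j ^ (m j - 1)) :=
      contDiff_const.mul ((hproj j).pow (m j - 1))
    have hden : ContDiff ℝ (⊤ : ℕ∞) (den m ε) := by
      apply ContDiff.sum
      intro k _
      exact (contDiff_const.mul ((hproj k).pow (m k - 1))).pow 2
    exact hnum.contDiffOn.div hden.contDiffOn
      (fun x hx => (den_pos m ε hm2 hε (Set.mem_compl_singleton_iff.mp hx)).ne')
  · -- derivative bounds
    intro α
    set a0 : Fin n → ℕ := Function.update (fun _ => 0) j (m j - 1) with ha0
    set L0 : List (ℝ × (Fin n → ℕ) × ℕ) := [(ε j * (m j : ℝ), a0, 1)] with hL0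
    have hbase : ∀ y : EuclideanSpace ℝ (Fin n), y ≠ 0 → b j y = evalL m ε L0 y := by
      intro y _
      rw [hb j y]
      simp only [hL0, evalL, List.map_cons, List.map_nil, List.sum_cons, List.sum_nil, add_zero,
        trm, pow_one]
      have hm0 : mono a0 y = y j ^ (m j - 1) := by
        rw [ha0, mono_update]
        simp
      rw [hm0, den, div_eq_mul_inv]
    have hGood0 : GoodL m L0 := by
      intro t ht
      simp only [hL0, List.mem_singleton] at ht
      subst ht
      simp only [sig]
      have hmj : (2:ℝ) ≤ (m j : ℝ) := by exact_mod_cast hm2 j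
      have hsig : ∑ k, (a0 k : ℝ) / (2 * ((m k : ℝ) - 1))
          = ((m j - 1 : ℕ) : ℝ) / (2 * ((m j : ℝ) - 1)) := by
        rw [Finset.sum_eq_single j]
        · rw [ha0]; simp
        · intro k _ hk
          rw [ha0]
          simp [Function.update_of_ne hk]
        · simp
      rw [hsig]
      have hcast : ((m j - 1 : ℕ) : ℝ) = (m j : ℝ) - 1 := by
        push_cast [Nat.cast_sub (by have := hm2 j; omega : 1 ≤ m j)]
        ring
      rw [hcast]
      have hne : (m j : ℝ) - 1 ≠ 0 := by linarith
      have : ((m j : ℝ) - 1) / (2 * ((m j : ℝ) - 1)) = 1/2 := by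
        field_simp
      rw [this]
      norm_num
    obtain ⟨L', hG', hrep⟩ := rep_foldr m ε hm2 hε α (List.finRange n) (b j) L0 hGood0 hbase
    refine ⟨(L'.map (fun t => |t.1|)).sum * (n : ℝ) ^ (((μ : ℝ) - 1)/2) + 1, ?_, ?_⟩
    · have hS : 0 ≤ (L'.map (fun t => |t.1|)).sum :=
        List.sum_nonneg (by
          intro y hy
          simp only [List.mem_map] at hy
          obtain ⟨t, _, rfl⟩ := hy
          exact abs_nonneg _)
      have : (0:ℝ) ≤ (n : ℝ) ^ (((μ : ℝ) - 1)/2) := by positivity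
      nlinarith
    · intro x hx
      have hk0 : Fin n := ⟨0, hn⟩
      have hxne : x ≠ 0 := by
        intro h
        have := hx hk0
        rw [h] at this
        norm_num at this
      have hval : mpd α (b j) x = evalL m ε L' x := hrep x hxne
      rw [hval]
      have hbd := evalL_bound m ε hn hm2 hε μ hμ2 hμle L' hG' x hx
      have hApos : (0:ℝ) ≤ ‖x‖ ^ (-((μ : ℝ) - 1)) := by positivity
      calc ‖evalL m ε L' x‖ = |evalL m ε L' x| := Real.norm_eq_abs _
        _ ≤ (L'.map (fun t => |t.1|)).sum * (n : ℝ) ^ (((μ : ℝ) - 1)/2)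
            * ‖x‖ ^ (-((μ : ℝ) - 1)) := hbd
        _ ≤ ((L'.map (fun t => |t.1|)).sum * (n : ℝ) ^ (((μ : ℝ) - 1)/2) + 1)
            * ‖x‖ ^ (-((μ : ℝ) - 1)) := by nlinarith
end

section
/- Let L* = -Σ_{j=1}^n (iλ)^{-1} ∂_{x_j} ∘ b_j with b_j = ∂_{x_j}φ/|∇φ|², φ(x) = Σ_j ±_j x_j^{m_j}, μ = min_j m_j ≥ 2. For each l ∈ ℤ≥0 write the l-fold iterate (L*)^l f = Σ_{|α| ≤ l} d_{l,α}(x) (λ⁻¹ i⁻¹ ∂_x)^α f for smooth f on ℝⁿ ∖ {0}. Then each coefficient d_{l,α} is smooth on ℝⁿ ∖ {0}, and for each multi-index β there exists C_{l,β} > 0 such that |∂_x^β d_{l,α}(x)| ≤ C_{l,β} λ^{-(l-|α|)} |x|^{-(μ-1)l} for all x with |x_k| ≥ 1 for every k. -/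
open Filter Topology Real MeasureTheory

namespace AdjAux

variable {n : ℕ}

local notation "E" => EuclideanSpace ℝ (Fin n)

theorem pd_congr_nhds {f g : E → ℂ} {x : E} (h : f =ᶠ[nhds x] g) (j : Fin n) :
    pd j f x = pd j g x := by
  unfold pd; rw [h.fderiv_eq]

theorem pd_congr_open {s : Set E} (hs : IsOpen s)
    {f g : E → ℂ} (h : Set.EqOn f g s) (j : Fin n) : Set.EqOn (pd j f) (pd j g) s := fun x hx =>
  pd_congr_nhds (Filter.eventuallyEq_of_mem (hs.mem_nhds hx) h) j

theorem foldr_pd_congr_open {s : Set E} (hs : IsOpen s) {f g : E → ℂ} (h : Set.EqOn f g s) :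
    ∀ js : List (Fin n), Set.EqOn (js.foldr pd f) (js.foldr pd g) s
  | [] => h
  | j :: t => by
      simpa using pd_congr_open hs (foldr_pd_congr_open hs h t) j

theorem pd_smooth {s : Set E} (hs : IsOpen s) {f : E → ℂ} (hf : ContDiffOn ℝ (⊤ : ℕ∞) f s) (j : Fin n) :
    ContDiffOn ℝ (⊤ : ℕ∞) (pd j f) s := by
  have h1 : ContDiffOn ℝ (⊤ : ℕ∞) (fderiv ℝ f) s := hf.fderiv_of_isOpen hs (by simp)
  exact h1.clm_apply contDiffOn_const

theorem foldr_pd_smooth {s : Set E} (hs : IsOpen s) {f : E → ℂ} (hf : ContDiffOn ℝ (⊤ : ℕ∞) f s) :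
    ∀ js : List (Fin n), ContDiffOn ℝ (⊤ : ℕ∞) (js.foldr pd f) s
  | [] => hf
  | j :: t => by simpa using pd_smooth hs (foldr_pd_smooth hs hf t) j

theorem diffAt_of_smooth {s : Set E} (hs : IsOpen s) {f : E → ℂ} (hf : ContDiffOn ℝ (⊤ : ℕ∞) f s)
    {x : E} (hx : x ∈ s) : DifferentiableAt ℝ f x :=
  (hf.contDiffAt (hs.mem_nhds hx)).differentiableAt (by simp)

theorem pd_const_mul (a : ℂ) (f : E → ℂ) (j : Fin n) :
    pd j (fun y => a * f y) = fun y => a * pd j f y := by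
  funext x
  rcases eq_or_ne a 0 with rfl | ha
  · simp only [zero_mul]
    simp [pd, fderiv_const]
  · by_cases hd : DifferentiableAt ℝ f x
    · simp [pd, fderiv_const_mul hd a]
    · have hd2 : ¬ DifferentiableAt ℝ (fun y => a * f y) x := by
        intro hcon
        have := hcon.const_mul a⁻¹
        simp only [← mul_assoc, inv_mul_cancel₀ ha, one_mul] at this
        exact hd this
      simp [pd, fderiv_zero_of_not_differentiableAt hd, fderiv_zero_of_not_differentiableAt hd2]

theorem pd_zero_fun (j : Fin n) : pd j (fun _ : E => (0:ℂ)) = fun _ => 0 := by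
  funext x; simp [pd]

theorem foldr_pd_zero_fun : ∀ js : List (Fin n),
    js.foldr pd (fun _ : E => (0:ℂ)) = fun _ => 0
  | [] => rfl
  | j :: t => by simp [List.foldr_cons, foldr_pd_zero_fun t, pd_zero_fun]

theorem foldr_pd_const (c : ℂ) : ∀ js : List (Fin n), js ≠ [] →
    js.foldr pd (fun _ : E => c) = fun _ => 0
  | [j], _ => by
      simp only [List.foldr_cons, List.foldr_nil]
      funext x; simp [pd, fderiv_const]
  | j :: i :: t, _ => by
      have h := foldr_pd_const c (i :: t) (by simp)
      simp only [List.foldr_cons] at h ⊢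
      rw [h, pd_zero_fun]

theorem foldr_pd_const_mul (a : ℂ) (f : E → ℂ) : ∀ js : List (Fin n),
    js.foldr pd (fun y => a * f y) = fun y => a * js.foldr pd f y
  | [] => rfl
  | j :: t => by
      simp only [List.foldr_cons, foldr_pd_const_mul a f t]
      exact pd_const_mul a _ j

theorem pd_add_at {f g : E → ℂ} {x : E} (hf : DifferentiableAt ℝ f x)
    (hg : DifferentiableAt ℝ g x) (j : Fin n) :
    pd j (fun y => f y + g y) x = pd j f x + pd j g x := by
  simp [pd, fderiv_fun_add hf hg]

theorem pd_mul_at {f g : E → ℂ} {x : E} (hf : DifferentiableAt ℝ f x)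
    (hg : DifferentiableAt ℝ g x) (j : Fin n) :
    pd j (fun y => f y * g y) x = pd j f x * g x + f x * pd j g x := by
  simp [pd, fderiv_fun_mul hf hg]; ring

end AdjAux

-- chunk 2
namespace AdjAux
variable {n : ℕ}
local notation "E" => EuclideanSpace ℝ (Fin n)

theorem pd_finset_sum_at {ι : Type*} (s : Finset ι) (F : ι → E → ℂ) {x : E}
    (h : ∀ i ∈ s, DifferentiableAt ℝ (F i) x) (j : Fin n) :
    pd j (fun y => ∑ i ∈ s, F i y) x = ∑ i ∈ s, pd j (F i) x := by
  simp [pd, fderiv_fun_sum h]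

theorem diffAt_list_sum {ι : Type*} (l : List ι) (F : ι → E → ℂ) {x : E}
    (h : ∀ i ∈ l, DifferentiableAt ℝ (F i) x) :
    DifferentiableAt ℝ (fun y => (l.map (fun i => F i y)).sum) x := by
  induction l with
  | nil => simpa using differentiableAt_const (0:ℂ)
  | cons a t ih =>
      simp only [List.map_cons, List.sum_cons]
      exact (h a (by simp)).add (ih (fun i hi => h i (by simp [hi])))

theorem pd_list_sum_at {ι : Type*} (l : List ι) (F : ι → E → ℂ) {x : E}
    (h : ∀ i ∈ l, DifferentiableAt ℝ (F i) x) (j : Fin n) :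
    pd j (fun y => (l.map (fun i => F i y)).sum) x = (l.map (fun i => pd j (F i) x)).sum := by
  induction l with
  | nil => simp [pd, fderiv_const]
  | cons a t ih =>
      simp only [List.map_cons, List.sum_cons]
      rw [pd_add_at (h a (by simp)) (diffAt_list_sum t F (fun i hi => h i (by simp [hi]))) j,
        ih (fun i hi => h i (by simp [hi]))]

theorem pd_comm {s : Set E} (hs : IsOpen s) {f : E → ℂ} (hf : ContDiffOn ℝ (⊤ : ℕ∞) f s)
    {x : E} (hx : x ∈ s) (i j : Fin n) : pd i (pd j f) x = pd j (pd i f) x := by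
  have hat : ContDiffAt ℝ (⊤ : ℕ∞) f x := hf.contDiffAt (hs.mem_nhds hx)
  have hsymm := hat.isSymmSndFDerivAt (by rw [minSmoothness_of_isRCLikeNormedField]; exact WithTop.coe_le_coe.mpr (le_top : (2 : ℕ∞) ≤ ⊤))
  have hdf : DifferentiableAt ℝ (fderiv ℝ f) x := by
    have : ContDiffAt ℝ (⊤ : ℕ∞) (fderiv ℝ f) x :=
      (hf.fderiv_of_isOpen hs (by simp)).contDiffAt (hs.mem_nhds hx)
    exact this.differentiableAt (by simp)
  have key : ∀ a b : Fin n, pd a (pd b f) x =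
      fderiv ℝ (fderiv ℝ f) x (EuclideanSpace.single a 1) (EuclideanSpace.single b 1) := by
    intro a b
    have : pd a (pd b f) x =
        fderiv ℝ (fun y => fderiv ℝ f y (EuclideanSpace.single b 1)) x
          (EuclideanSpace.single a 1) := rfl
    rw [this, fderiv_clm_apply hdf (differentiableAt_const _)]
    simp
  rw [key, key, hsymm]

end AdjAux

-- chunk 3
namespace AdjAux
variable {n : ℕ}
local notation "E" => EuclideanSpace ℝ (Fin n)

theorem iterate_pd_smooth {s : Set E} (hs : IsOpen s) {f : E → ℂ} (hf : ContDiffOn ℝ (⊤ : ℕ∞) f s)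
    (j : Fin n) : ∀ k : ℕ, ContDiffOn ℝ (⊤ : ℕ∞) ((pd j)^[k] f) s
  | 0 => hf
  | k + 1 => by
      rw [Function.iterate_succ_apply']
      exact pd_smooth hs (iterate_pd_smooth hs hf j k) j

theorem iterate_pd_congr_open {s : Set E} (hs : IsOpen s) {f g : E → ℂ}
    (h : Set.EqOn f g s) (j : Fin n) : ∀ k : ℕ, Set.EqOn ((pd j)^[k] f) ((pd j)^[k] g) s
  | 0 => h
  | k + 1 => by
      rw [Function.iterate_succ_apply', Function.iterate_succ_apply']
      exact pd_congr_open hs (iterate_pd_congr_open hs h j k) j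

theorem pd_iterate_comm {s : Set E} (hs : IsOpen s) {f : E → ℂ} (hf : ContDiffOn ℝ (⊤ : ℕ∞) f s)
    (i j : Fin n) : ∀ k : ℕ, ∀ x ∈ s, pd j ((pd i)^[k] f) x = (pd i)^[k] (pd j f) x
  | 0 => fun x _ => rfl
  | k + 1 => by
      intro x hx
      rw [Function.iterate_succ_apply']
      have hg : ContDiffOn ℝ (⊤ : ℕ∞) ((pd i)^[k] f) s := iterate_pd_smooth hs hf i k
      rw [pd_comm hs hg hx j i]
      have heq : Set.EqOn (pd j ((pd i)^[k] f)) ((pd i)^[k] (pd j f)) s := fun y hy =>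
        pd_iterate_comm hs hf i j k y hy
      rw [pd_congr_open hs heq i hx,
        ← Function.iterate_succ_apply' (pd i) k (pd j f)]

theorem iterate_pd_const_mul (a : ℂ) (f : E → ℂ) (j : Fin n) : ∀ k : ℕ,
    (pd j)^[k] (fun y => a * f y) = fun y => a * (pd j)^[k] f y
  | 0 => rfl
  | k + 1 => by
      rw [Function.iterate_succ_apply' (pd j) k (fun y => a * f y),
        iterate_pd_const_mul a f j k, pd_const_mul]
      funext y
      rw [Function.iterate_succ_apply' (pd j) k f]

/-- `mpd` over an arbitrary list of coordinates. -/
noncomputable def mpdL (L : List (Fin n)) (α : Fin n → ℕ) (f : E → ℂ) : E → ℂ :=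
  L.foldr (fun j g => (pd j)^[α j] g) f

theorem mpd_eq_mpdL (α : Fin n → ℕ) (f : E → ℂ) : mpd α f = mpdL (List.finRange n) α f := rfl

theorem mpdL_congr_orders {α α' : Fin n → ℕ} (f : E → ℂ) :
    ∀ L : List (Fin n), (∀ i ∈ L, α i = α' i) → mpdL L α f = mpdL L α' f
  | [], _ => rfl
  | j :: t, h => by
      simp only [mpdL, List.foldr_cons]
      rw [show t.foldr (fun j g => (pd j)^[α j] g) f = mpdL t α f from rfl,
        mpdL_congr_orders f t (fun i hi => h i (by simp [hi])), h j (by simp)]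
      rfl

theorem mpdL_smooth {s : Set E} (hs : IsOpen s) {f : E → ℂ} (hf : ContDiffOn ℝ (⊤ : ℕ∞) f s)
    (α : Fin n → ℕ) : ∀ L : List (Fin n), ContDiffOn ℝ (⊤ : ℕ∞) (mpdL L α f) s
  | [] => hf
  | j :: t => by
      have := iterate_pd_smooth hs (mpdL_smooth hs hf α t) j (α j)
      simpa [mpdL, List.foldr_cons] using this

theorem mpdL_congr_open {s : Set E} (hs : IsOpen s) {f g : E → ℂ} (h : Set.EqOn f g s)
    (α : Fin n → ℕ) : ∀ L : List (Fin n), Set.EqOn (mpdL L α f) (mpdL L α g) s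
  | [] => h
  | j :: t => by
      have := iterate_pd_congr_open hs (mpdL_congr_open hs h α t) j (α j)
      simpa [mpdL, List.foldr_cons] using this

theorem pd_mpdL {s : Set E} (hs : IsOpen s) {f : E → ℂ} (hf : ContDiffOn ℝ (⊤ : ℕ∞) f s)
    (j : Fin n) (α : Fin n → ℕ) :
    ∀ L : List (Fin n), L.Nodup → j ∈ L → ∀ x ∈ s,
      pd j (mpdL L α f) x = mpdL L (fun i => α i + if i = j then 1 else 0) f x
  | i :: t, hnd, hmem, x, hx => by
      have hnd' := (List.nodup_cons.mp hnd)
      rcases eq_or_ne i j with rfl | hij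
      · have ht : ∀ k ∈ t, α k = α k + (if k = i then 1 else 0) := by
          intro k hk
          have : k ≠ i := fun hc => hnd'.1 (hc ▸ hk)
          simp [this]
        show pd i ((pd i)^[α i] (mpdL t α f)) x = (pd i)^[α i + if i = i then 1 else 0] (mpdL t (fun k => α k + if k = i then 1 else 0) f) x
        rw [← mpdL_congr_orders f t ht, if_pos rfl,
          ← Function.iterate_succ_apply' (pd i) (α i) (mpdL t α f)]
      · rcases List.mem_cons.mp hmem with hc | hmem'
        · exact absurd hc (Ne.symm hij)
        have hsm : ContDiffOn ℝ (⊤ : ℕ∞) (mpdL t α f) s := mpdL_smooth hs hf α t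
        show pd j ((pd i)^[α i] (mpdL t α f)) x = (pd i)^[α i + if i = j then 1 else 0] (mpdL t (fun k => α k + if k = j then 1 else 0) f) x
        rw [pd_iterate_comm hs hsm i j (α i) x hx]
        have heq : Set.EqOn (pd j (mpdL t α f))
            (mpdL t (fun k => α k + if k = j then 1 else 0) f) s := fun y hy =>
          pd_mpdL hs hf j α t hnd'.2 hmem' y hy
        rw [iterate_pd_congr_open hs heq i (α i) hx, if_neg hij, Nat.add_zero]

theorem pd_mpd {s : Set E} (hs : IsOpen s) {f : E → ℂ} (hf : ContDiffOn ℝ (⊤ : ℕ∞) f s)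
    (j : Fin n) (α : Fin n → ℕ) {x : E} (hx : x ∈ s) :
    pd j (mpd α f) x = mpd (fun i => α i + if i = j then 1 else 0) f x := by
  rw [mpd_eq_mpdL, mpd_eq_mpdL]
  exact pd_mpdL hs hf j α (List.finRange n) (List.nodup_finRange n) (List.mem_finRange j) x hx

theorem mpd_zero (f : E → ℂ) : mpd (fun _ => 0) f = f := by
  rw [mpd_eq_mpdL]
  induction (List.finRange n) with
  | nil => rfl
  | cons j t ih => simpa [mpdL, List.foldr_cons] using ih

theorem mpd_smooth {s : Set E} (hs : IsOpen s) {f : E → ℂ} (hf : ContDiffOn ℝ (⊤ : ℕ∞) f s)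
    (α : Fin n → ℕ) : ContDiffOn ℝ (⊤ : ℕ∞) (mpd α f) s := mpdL_smooth hs hf α _

theorem mpd_const_mul (a : ℂ) (f : E → ℂ) (α : Fin n → ℕ) :
    mpd α (fun y => a * f y) = fun y => a * mpd α f y := by
  rw [mpd_eq_mpdL, mpd_eq_mpdL]
  induction (List.finRange n) with
  | nil => rfl
  | cons j t ih =>
      show (pd j)^[α j] (mpdL t α fun y => a * f y) = _
      rw [ih, iterate_pd_const_mul]
      rfl

theorem iterate_pd_eq_foldr_replicate (j : Fin n) (f : E → ℂ) : ∀ k : ℕ,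
    (pd j)^[k] f = (List.replicate k j).foldr pd f
  | 0 => rfl
  | k + 1 => by
      rw [Function.iterate_succ_apply', iterate_pd_eq_foldr_replicate j f k,
        List.replicate_succ, List.foldr_cons]

theorem mpdL_eq_foldr (α : Fin n → ℕ) (f : E → ℂ) : ∀ L : List (Fin n),
    mpdL L α f = (L.flatMap fun j => List.replicate (α j) j).foldr pd f
  | [] => rfl
  | j :: t => by
      show (pd j)^[α j] (mpdL t α f) = _
      rw [mpdL_eq_foldr α f t, List.flatMap_cons, List.foldr_append,
        iterate_pd_eq_foldr_replicate]

end AdjAux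

-- chunk 4 : splits and Leibniz
namespace AdjAux
variable {n : ℕ}
local notation "E" => EuclideanSpace ℝ (Fin n)

/-- All ways to distribute a list of derivatives onto two factors. -/
def splits : List (Fin n) → List (List (Fin n) × List (Fin n))
  | [] => [([], [])]
  | j :: t => ((splits t).map fun p => (j :: p.1, p.2)) ++
      ((splits t).map fun p => (p.1, j :: p.2))

theorem splits_length : ∀ (js : List (Fin n)) (p : List (Fin n) × List (Fin n)),
    p ∈ splits js → p.1.length + p.2.length = js.length
  | [], p, hp => by simp [splits] at hp; simp [hp]
  | j :: t, p, hp => by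
      simp only [splits, List.mem_append, List.mem_map] at hp
      rcases hp with ⟨q, hq, rfl⟩ | ⟨q, hq, rfl⟩ <;>
        simp [splits_length t q hq, ← Nat.add_assoc, Nat.add_right_comm, Nat.succ_eq_add_one] <;> omega

theorem splits_head : ∀ js : List (Fin n), ∃ r, splits js = (js, ([] : List (Fin n))) :: r ∧
    ∀ p ∈ r, p.2 ≠ ([] : List (Fin n))
  | [] => ⟨[], rfl, by simp⟩
  | j :: t => by
      obtain ⟨r, hr, hr2⟩ := splits_head t
      refine ⟨(r.map fun p => (j :: p.1, p.2)) ++ ((splits t).map fun p => (p.1, j :: p.2)), ?_, ?_⟩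
      · simp [splits, hr]
      · intro p hp
        simp only [List.mem_append, List.mem_map] at hp
        rcases hp with ⟨q, hq, rfl⟩ | ⟨q, hq, rfl⟩
        · exact hr2 q hq
        · simp

/-- Leibniz rule for iterated coordinate derivatives of a product. -/
theorem foldr_pd_mul {s : Set E} (hs : IsOpen s) {g h : E → ℂ}
    (hg : ContDiffOn ℝ (⊤ : ℕ∞) g s) (hh : ContDiffOn ℝ (⊤ : ℕ∞) h s) :
    ∀ js : List (Fin n), ∀ x ∈ s,
      js.foldr pd (fun y => g y * h y) x =
        ((splits js).map fun p => p.1.foldr pd g x * p.2.foldr pd h x).sum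
  | [], x, hx => by simp [splits]
  | j :: t, x, hx => by
      have heq : Set.EqOn (t.foldr pd (fun y => g y * h y))
          (fun y => ((splits t).map fun p => p.1.foldr pd g y * p.2.foldr pd h y).sum) s :=
        fun y hy => foldr_pd_mul hs hg hh t y hy
      rw [List.foldr_cons, pd_congr_open hs heq j hx]
      rw [pd_list_sum_at (splits t) (fun p y => p.1.foldr pd g y * p.2.foldr pd h y)
        (fun p _ => ((diffAt_of_smooth hs (foldr_pd_smooth hs hg p.1) hx).mul
          (diffAt_of_smooth hs (foldr_pd_smooth hs hh p.2) hx))) j]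
      have hterm : ∀ p ∈ splits t,
          pd j (fun y => p.1.foldr pd g y * p.2.foldr pd h y) x =
            (j :: p.1).foldr pd g x * p.2.foldr pd h x +
              p.1.foldr pd g x * (j :: p.2).foldr pd h x := by
        intro p _
        rw [pd_mul_at (diffAt_of_smooth hs (foldr_pd_smooth hs hg p.1) hx)
          (diffAt_of_smooth hs (foldr_pd_smooth hs hh p.2) hx) j]
        rfl
      rw [List.map_congr_left hterm]
      simp only [splits, List.map_append, List.sum_append, List.map_map]
      rw [List.sum_map_add]
      rfl

theorem norm_list_sum_le {ι : Type*} (l : List ι) (F : ι → ℂ) (G : ι → ℝ)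
    (h : ∀ p ∈ l, ‖F p‖ ≤ G p) : ‖(l.map F).sum‖ ≤ (l.map G).sum := by
  induction l with
  | nil => simp
  | cons a t ih =>
      simp only [List.map_cons, List.sum_cons]
      exact (norm_add_le _ _).trans (add_le_add (h a (by simp)) (ih fun p hp => h p (by simp [hp])))

end AdjAux

-- chunk 5 : the symbol class
namespace AdjAux
variable {n : ℕ}
local notation "E" => EuclideanSpace ℝ (Fin n)

/-- The denominator `|∇φ|²`. -/
def Sf (m : Fin n → ℕ) (ε : Fin n → ℝ) (x : EuclideanSpace ℝ (Fin n)) : ℝ :=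
  ∑ k, (ε k * (m k : ℝ) * x k ^ (m k - 1)) ^ 2

/-- The region `{x | ∀ k, 1 ≤ |x k|}`. -/
def Rg (n : ℕ) : Set (EuclideanSpace ℝ (Fin n)) := {x | ∀ k, 1 ≤ |x k|}

/-- Symbol class: smooth away from 0, all coordinate derivatives bounded by `C (Sf x)^a` on
the region. -/
def SymS (m : Fin n → ℕ) (ε : Fin n → ℝ) (a : ℝ) (g : EuclideanSpace ℝ (Fin n) → ℂ) : Prop :=
  ContDiffOn ℝ (⊤ : ℕ∞) g ({0}ᶜ : Set (EuclideanSpace ℝ (Fin n))) ∧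
    ∀ js : List (Fin n), ∃ C : ℝ, 0 < C ∧
      ∀ x ∈ Rg n, ‖js.foldr pd g x‖ ≤ C * (Sf m ε x) ^ a

section SymS

variable {m : Fin n → ℕ} {ε : Fin n → ℝ}
variable (hn : 1 ≤ n) (hε : ∀ j, ε j = 1 ∨ ε j = -1) (hm2 : ∀ j, 2 ≤ m j)

theorem Rg_subset (hn : 1 ≤ n) : Rg n ⊆ ({0}ᶜ : Set E) := by
  intro x hx
  have h0 := hx ⟨0, hn⟩
  intro hc
  rw [Set.mem_singleton_iff] at hc
  rw [hc] at h0
  norm_num at h0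

include hε hm2 in
theorem Sf_term_ge_one {x : E} (hx : x ∈ Rg n) (k : Fin n) :
    1 ≤ (ε k * (m k : ℝ) * x k ^ (m k - 1)) ^ 2 := by
  have h1 : (1:ℝ) ≤ |ε k * (m k : ℝ) * x k ^ (m k - 1)| := by
    rw [abs_mul, abs_mul]
    have hek : |ε k| = 1 := by rcases hε k with h | h <;> simp [h]
    have hmk : (1:ℝ) ≤ |(m k : ℝ)| := by
      rw [abs_of_nonneg (by positivity)]
      exact_mod_cast le_trans (by norm_num) (hm2 k)
    have hxk : (1:ℝ) ≤ |x k ^ (m k - 1)| := by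
      rw [abs_pow]
      exact one_le_pow₀ (hx k)
    calc (1:ℝ) = 1 * 1 * 1 := by norm_num
    _ ≤ |ε k| * |(m k : ℝ)| * |x k ^ (m k - 1)| := by
        apply mul_le_mul (by rw [hek]; simpa using hmk) hxk (by norm_num)
        positivity
  calc (1:ℝ) = 1 ^ 2 := by norm_num
  _ ≤ |ε k * (m k : ℝ) * x k ^ (m k - 1)| ^ 2 := by
      apply pow_le_pow_left₀ (by norm_num) h1
  _ = _ := by rw [sq_abs]

include hn hε hm2 in
theorem Sf_ge_one {x : E} (hx : x ∈ Rg n) : 1 ≤ Sf m ε x := by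
  calc (1:ℝ) ≤ (ε ⟨0, hn⟩ * (m ⟨0, hn⟩ : ℝ) * x ⟨0, hn⟩ ^ (m ⟨0, hn⟩ - 1)) ^ 2 :=
        Sf_term_ge_one hε hm2 hx ⟨0, hn⟩
  _ ≤ Sf m ε x := by
      unfold Sf
      exact Finset.single_le_sum (f := fun k => (ε k * (m k : ℝ) * x k ^ (m k - 1)) ^ 2)
        (fun k _ => sq_nonneg _) (Finset.mem_univ _)

include hn hε hm2 in
theorem Sf_pos {x : E} (hx : x ∈ Rg n) : 0 < Sf m ε x :=
  lt_of_lt_of_le one_pos (Sf_ge_one hn hε hm2 hx)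

theorem Sf_term_le (x : E) (j : Fin n) :
    (ε j * (m j : ℝ) * x j ^ (m j - 1)) ^ 2 ≤ Sf m ε x := by
  unfold Sf
  exact Finset.single_le_sum (f := fun k => (ε k * (m k : ℝ) * x k ^ (m k - 1)) ^ 2)
    (fun k _ => sq_nonneg _) (Finset.mem_univ _)

theorem foldr_pd_add {s : Set E} (hs : IsOpen s) {g h : E → ℂ}
    (hg : ContDiffOn ℝ (⊤ : ℕ∞) g s) (hh : ContDiffOn ℝ (⊤ : ℕ∞) h s) :
    ∀ js : List (Fin n), ∀ y ∈ s,
      js.foldr pd (fun y => g y + h y) y = js.foldr pd g y + js.foldr pd h y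
  | [], y, _ => rfl
  | j :: t, y, hy => by
      simp only [List.foldr_cons]
      rw [pd_congr_open hs (fun z hz => foldr_pd_add hs hg hh t z hz) j hy,
        pd_add_at (diffAt_of_smooth hs (foldr_pd_smooth hs hg t) hy)
          (diffAt_of_smooth hs (foldr_pd_smooth hs hh t) hy) j]

theorem SymS_zero_fun (a : ℝ) : SymS m ε a (fun _ => (0:ℂ)) := by
  refine ⟨contDiffOn_const, fun js => ⟨1, one_pos, fun x hx => ?_⟩⟩
  rw [foldr_pd_zero_fun]
  have : (0:ℝ) ≤ Sf m ε x := Finset.sum_nonneg fun k _ => sq_nonneg _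
  simp [Real.rpow_natCast]
  positivity

theorem SymS_const_mul {a : ℝ} {g : E → ℂ} (hg : SymS m ε a g) (c : ℂ) :
    SymS m ε a (fun y => c * g y) := by
  refine ⟨(contDiffOn_const (c := c)).mul hg.1, fun js => ?_⟩
  obtain ⟨C, hC, hbd⟩ := hg.2 js
  refine ⟨(‖c‖ + 1) * C, by positivity, fun x hx => ?_⟩
  rw [foldr_pd_const_mul]
  have h1 : ‖c * js.foldr pd g x‖ = ‖c‖ * ‖js.foldr pd g x‖ := norm_mul _ _
  rw [h1, mul_assoc]
  have h2 : ‖js.foldr pd g x‖ ≤ C * Sf m ε x ^ a := hbd x hx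
  have h3 : (0:ℝ) ≤ C * Sf m ε x ^ a := le_trans (norm_nonneg _) h2
  calc ‖c‖ * ‖js.foldr pd g x‖ ≤ ‖c‖ * (C * Sf m ε x ^ a) :=
        mul_le_mul_of_nonneg_left h2 (norm_nonneg _)
  _ ≤ (‖c‖ + 1) * (C * Sf m ε x ^ a) := mul_le_mul_of_nonneg_right (by linarith) h3

theorem SymS_neg {a : ℝ} {g : E → ℂ} (hg : SymS m ε a g) : SymS m ε a (fun y => -g y) := by
  have := SymS_const_mul hg (-1)
  simpa using this

include hn in
theorem SymS_add {a : ℝ} {g h : E → ℂ} (hg : SymS m ε a g) (hh : SymS m ε a h) :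
    SymS m ε a (fun y => g y + h y) := by
  refine ⟨hg.1.add hh.1, fun js => ?_⟩
  obtain ⟨C, hC, hbd⟩ := hg.2 js
  obtain ⟨C', hC', hbd'⟩ := hh.2 js
  refine ⟨C + C', by positivity, fun x hx => ?_⟩
  rw [foldr_pd_add isOpen_compl_singleton hg.1 hh.1 js x (Rg_subset hn hx)]
  calc ‖js.foldr pd g x + js.foldr pd h x‖ ≤ ‖js.foldr pd g x‖ + ‖js.foldr pd h x‖ :=
        norm_add_le _ _
  _ ≤ C * Sf m ε x ^ a + C' * Sf m ε x ^ a := add_le_add (hbd x hx) (hbd' x hx)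
  _ = (C + C') * Sf m ε x ^ a := by ring

theorem SymS_pd {a : ℝ} {g : E → ℂ} (hg : SymS m ε a g) (j : Fin n) :
    SymS m ε a (pd j g) := by
  refine ⟨pd_smooth isOpen_compl_singleton hg.1 j, fun js => ?_⟩
  obtain ⟨C, hC, hbd⟩ := hg.2 (js ++ [j])
  refine ⟨C, hC, fun x hx => ?_⟩
  have : (js ++ [j]).foldr pd g = js.foldr pd (pd j g) := by
    rw [List.foldr_append]; rfl
  rw [← this]
  exact hbd x hx

include hn hε hm2 in
theorem SymS_mul {a b : ℝ} {g h : E → ℂ} (hg : SymS m ε a g) (hh : SymS m ε b h) :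
    SymS m ε (a + b) (fun y => g y * h y) := by
  refine ⟨hg.1.mul hh.1, fun js => ?_⟩
  choose Cg hCgpos hCg using hg.2
  choose Ch hChpos hCh using hh.2
  refine ⟨max 1 (((splits js).map fun p => Cg p.1 * Ch p.2).sum),
    lt_of_lt_of_le one_pos (le_max_left _ _), fun x hx => ?_⟩
  have hxU : x ∈ ({0}ᶜ : Set E) := Rg_subset hn hx
  rw [foldr_pd_mul isOpen_compl_singleton hg.1 hh.1 js x hxU]
  have hSpos : 0 < Sf m ε x := Sf_pos hn hε hm2 hx
  have hbd : ∀ p ∈ splits js,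
      ‖p.1.foldr pd g x * p.2.foldr pd h x‖ ≤ Cg p.1 * Ch p.2 * Sf m ε x ^ (a + b) := by
    intro p _
    rw [norm_mul, Real.rpow_add hSpos, show Cg p.1 * Ch p.2 * (Sf m ε x ^ a * Sf m ε x ^ b)
      = (Cg p.1 * Sf m ε x ^ a) * (Ch p.2 * Sf m ε x ^ b) by ring]
    exact mul_le_mul (hCg p.1 x hx) (hCh p.2 x hx) (norm_nonneg _)
      (mul_pos (hCgpos p.1) (Real.rpow_pos_of_pos hSpos a)).le
  calc ‖((splits js).map fun p => p.1.foldr pd g x * p.2.foldr pd h x).sum‖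
      ≤ ((splits js).map fun p => Cg p.1 * Ch p.2 * Sf m ε x ^ (a + b)).sum :=
        norm_list_sum_le _ _ _ hbd
  _ = ((splits js).map fun p => Cg p.1 * Ch p.2).sum * Sf m ε x ^ (a + b) := by
      rw [← List.sum_map_mul_right]
  _ ≤ max 1 (((splits js).map fun p => Cg p.1 * Ch p.2).sum) * Sf m ε x ^ (a + b) :=
      mul_le_mul_of_nonneg_right (le_max_right _ _) (Real.rpow_pos_of_pos hSpos (a + b)).le

include hn in
theorem SymS_congr {a : ℝ} {g g' : E → ℂ} (hg : SymS m ε a g)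
    (h : Set.EqOn g g' ({0}ᶜ : Set E)) : SymS m ε a g' := by
  refine ⟨hg.1.congr fun y hy => (h hy).symm, fun js => ?_⟩
  obtain ⟨C, hC, hbd⟩ := hg.2 js
  refine ⟨C, hC, fun x hx => ?_⟩
  rw [← foldr_pd_congr_open isOpen_compl_singleton h js (Rg_subset hn hx)]
  exact hbd x hx

end SymS
end AdjAux

-- chunk 6 : concrete symbols
namespace AdjAux
variable {n : ℕ}
local notation "E" => EuclideanSpace ℝ (Fin n)

/-- The coordinate monomial as a complex function. -/
def cmon (j : Fin n) (c : ℂ) (q : ℕ) : EuclideanSpace ℝ (Fin n) → ℂ :=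
  fun y => c * (y j : ℂ) ^ q

theorem cmon_contDiff (j : Fin n) (c : ℂ) (q : ℕ) : ContDiff ℝ (⊤ : ℕ∞) (cmon j c q) := by
  have hg : ContDiff ℝ (⊤ : ℕ∞) (fun y : E => ((y j : ℝ) : ℂ)) :=
    (Complex.ofRealCLM.comp (EuclideanSpace.proj j)).contDiff
  exact contDiff_const.mul (hg.pow q)

theorem pd_cmon (i j : Fin n) (c : ℂ) (q : ℕ) :
    pd i (cmon j c q) = cmon j (if i = j then c * q else 0) (q - 1) := by
  funext x
  have hg : HasFDerivAt (fun y : E => ((y j : ℝ) : ℂ))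
      (Complex.ofRealCLM.comp (EuclideanSpace.proj j)) x := by
    exact (Complex.ofRealCLM.comp (EuclideanSpace.proj j)).hasFDerivAt
  have h2 : HasDerivAt (fun z : ℂ => z ^ q) ((q : ℂ) * ((x j : ℂ)) ^ (q - 1)) ((x j : ℂ)) :=
    hasDerivAt_pow q _
  have h3 := h2.comp_hasFDerivAt x hg
  have h4 := h3.const_mul c
  have h4' : HasFDerivAt (cmon j c q)
      (c • (((q : ℂ) * ((x j : ℂ)) ^ (q - 1)) •
        (Complex.ofRealCLM.comp (EuclideanSpace.proj j)))) x := by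
    unfold cmon; simpa [Function.comp_def] using h4
  have h5 : pd i (cmon j c q) x =
      (c • (((q : ℂ) * ((x j : ℂ)) ^ (q - 1)) •
        (Complex.ofRealCLM.comp (EuclideanSpace.proj j)))) (EuclideanSpace.single i 1) := by
    unfold pd
    rw [h4'.fderiv]
  rw [h5]
  rcases eq_or_ne i j with rfl | hij
  · simp only [ContinuousLinearMap.smul_apply, ContinuousLinearMap.coe_comp', Function.comp_apply,
      Complex.ofRealCLM_apply, cmon, PiLp.proj_apply, EuclideanSpace.single_apply, if_pos rfl,
      smul_eq_mul]
    push_cast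
    ring
  · simp only [ContinuousLinearMap.smul_apply, ContinuousLinearMap.coe_comp', Function.comp_apply,
      Complex.ofRealCLM_apply, cmon, PiLp.proj_apply, EuclideanSpace.single_apply,
      if_neg hij, if_neg (Ne.symm hij), smul_eq_mul]
    push_cast
    ring

theorem foldr_cmon (j : Fin n) (c : ℂ) (q : ℕ) : ∀ js : List (Fin n),
    ∃ (c' : ℂ) (q' : ℕ), q' ≤ q ∧ js.foldr pd (cmon j c q) = cmon j c' q'
  | [] => ⟨c, q, le_refl _, rfl⟩
  | i :: t => by
      obtain ⟨c', q', hq', heq⟩ := foldr_cmon j c q t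
      refine ⟨if i = j then c' * q' else 0, q' - 1, le_trans (Nat.sub_le _ _) hq', ?_⟩
      rw [List.foldr_cons, heq, pd_cmon]

section Concrete
variable {m : Fin n → ℕ} {ε : Fin n → ℝ}
variable (hn : 1 ≤ n) (hε : ∀ j, ε j = 1 ∨ ε j = -1) (hm2 : ∀ j, 2 ≤ m j)

include hε hm2 in
theorem abs_monomial_le_sqrtS {x : E} (hx : x ∈ Rg n) (j : Fin n) {q : ℕ} (hq : q ≤ m j - 1) :
    |x j| ^ q ≤ Sf m ε x ^ (1/2 : ℝ) := by
  have h1 : |x j| ^ q ≤ |x j| ^ (m j - 1) := pow_le_pow_right₀ (hx j) hq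
  have h2 : (|x j| ^ (m j - 1)) ^ 2 ≤ Sf m ε x := by
    have := Sf_term_le (m := m) (ε := ε) x j
    have heq : (ε j * (m j : ℝ) * x j ^ (m j - 1)) ^ 2
        = (ε j)^2 * (m j : ℝ)^2 * (x j ^ (m j - 1))^2 := by ring
    have hε2 : (ε j)^2 = 1 := by rcases hε j with h | h <;> simp [h]
    have hm1 : (1:ℝ) ≤ (m j : ℝ)^2 := by
      have : (2:ℝ) ≤ (m j : ℝ) := by exact_mod_cast hm2 j
      nlinarith
    calc (|x j| ^ (m j - 1)) ^ 2 = (x j ^ (m j - 1))^2 := by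
          rw [← abs_pow, sq_abs]
    _ ≤ (ε j)^2 * (m j : ℝ)^2 * (x j ^ (m j - 1))^2 := by
          rw [hε2]; nlinarith [sq_nonneg (x j ^ (m j - 1))]
    _ ≤ Sf m ε x := heq ▸ this
  have h3 : |x j| ^ (m j - 1) ≤ Sf m ε x ^ (1/2 : ℝ) := by
    rw [show Sf m ε x ^ (1/2 : ℝ) = Real.sqrt (Sf m ε x) by
      rw [Real.sqrt_eq_rpow]]
    exact Real.le_sqrt_of_sq_le h2
  exact h1.trans h3

include hn hε hm2 in
theorem SymS_cmon (j : Fin n) (c : ℂ) {q : ℕ} (hq : q ≤ m j - 1) :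
    SymS m ε (1/2 : ℝ) (cmon j c q) := by
  refine ⟨(cmon_contDiff j c q).contDiffOn, fun js => ?_⟩
  obtain ⟨c', q', hq', heq⟩ := foldr_cmon j c q js
  refine ⟨‖c'‖ + 1, by positivity, fun x hx => ?_⟩
  rw [heq]
  have h1 : ‖cmon j c' q' x‖ = ‖c'‖ * |x j| ^ q' := by
    rw [cmon, norm_mul, norm_pow]
    congr 2
    rw [Complex.norm_real]
    rfl
  rw [h1]
  have h2 : |x j| ^ q' ≤ Sf m ε x ^ (1/2 : ℝ) :=
    abs_monomial_le_sqrtS hε hm2 hx j (hq'.trans hq)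
  have h3 : (0:ℝ) ≤ Sf m ε x ^ (1/2 : ℝ) := by
    have := Sf_pos hn hε hm2 hx
    positivity
  calc ‖c'‖ * |x j| ^ q' ≤ ‖c'‖ * Sf m ε x ^ (1/2 : ℝ) :=
        mul_le_mul_of_nonneg_left h2 (norm_nonneg _)
  _ ≤ (‖c'‖ + 1) * Sf m ε x ^ (1/2 : ℝ) := mul_le_mul_of_nonneg_right (by linarith) h3

theorem SymS_finset_sum {a : ℝ} {ι : Type*} (s : Finset ι) (F : ι → E → ℂ)
    (hF : ∀ i ∈ s, SymS m ε a (F i)) (hzero : SymS m ε a (fun _ => (0:ℂ)))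
    (hadd : ∀ {g h : E → ℂ}, SymS m ε a g → SymS m ε a h → SymS m ε a (fun y => g y + h y)) :
    SymS m ε a (fun y => ∑ i ∈ s, F i y) := by
  induction s using Finset.cons_induction with
  | empty => simpa using hzero
  | cons i s his ih =>
      have := hadd (hF i (by simp)) (ih fun i hi => hF i (by simp [hi]))
      simpa using this

end Concrete
end AdjAux

-- chunk 7 : the denominator and its inverse
namespace AdjAux
variable {n : ℕ}
local notation "E" => EuclideanSpace ℝ (Fin n)

/-- Complex version of the denominator. -/
def Scf (m : Fin n → ℕ) (ε : Fin n → ℝ) : EuclideanSpace ℝ (Fin n) → ℂ :=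
  fun y => ((Sf m ε y : ℝ) : ℂ)

section Den
variable {m : Fin n → ℕ} {ε : Fin n → ℝ}
variable (hn : 1 ≤ n) (hε : ∀ j, ε j = 1 ∨ ε j = -1) (hm2 : ∀ j, 2 ≤ m j)

include hε hm2 in
theorem Sf_pos_compl {x : E} (hx : x ∈ ({0}ᶜ : Set E)) : 0 < Sf m ε x := by
  have hx0 : x ≠ 0 := hx
  have hex : ∃ k, x k ≠ 0 := by
    by_contra hc
    push_neg at hc
    exact hx0 (by ext k; simpa using hc k)
  obtain ⟨k, hk⟩ := hex
  apply Finset.sum_pos' (fun i _ => sq_nonneg _) ⟨k, Finset.mem_univ k, ?_⟩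
  have hεk : ε k ≠ 0 := by rcases hε k with h | h <;> rw [h] <;> norm_num
  have hmk : (m k : ℝ) ≠ 0 := by
    have := hm2 k; positivity
  positivity

include hn hε hm2 in
theorem SymS_Scf : SymS m ε 1 (Scf m ε) := by
  have heq : ∀ y : E, Scf m ε y =
      ∑ k, cmon k ((ε k * (m k : ℝ) : ℝ) : ℂ) (m k - 1) y *
        cmon k ((ε k * (m k : ℝ) : ℝ) : ℂ) (m k - 1) y := by
    intro y
    unfold Scf Sf cmon
    push_cast
    congr 1
    funext k
    ring
  have hsum : SymS m ε 1 (fun y => ∑ k,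
      cmon k ((ε k * (m k : ℝ) : ℝ) : ℂ) (m k - 1) y *
        cmon k ((ε k * (m k : ℝ) : ℝ) : ℂ) (m k - 1) y) := by
    apply SymS_finset_sum _ _ (fun k _ => ?_) (SymS_zero_fun 1) (fun hg hh => SymS_add hn hg hh)
    have h12 : (1:ℝ) = 1/2 + 1/2 := by norm_num
    rw [h12]
    exact SymS_mul hn hε hm2 (SymS_cmon hn hε hm2 k _ (le_refl _))
      (SymS_cmon hn hε hm2 k _ (le_refl _))
  exact SymS_congr hn hsum (fun y _ => (heq y).symm)

include hn hε hm2 in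
theorem SymS_inv_Scf : SymS m ε (-1) (fun y => (Scf m ε y)⁻¹) := by
  have hScf : SymS m ε 1 (Scf m ε) := SymS_Scf hn hε hm2
  have hne : ∀ y ∈ ({0}ᶜ : Set E), Scf m ε y ≠ 0 := by
    intro y hy
    have := Sf_pos_compl hε hm2 hy
    simp only [Scf, ne_eq, Complex.ofReal_eq_zero]
    exact ne_of_gt this
  set T : E → ℂ := fun y => (Scf m ε y)⁻¹ with hT
  have hTsm : ContDiffOn ℝ (⊤ : ℕ∞) T ({0}ᶜ : Set E) := hScf.1.inv hne
  refine ⟨hTsm, ?_⟩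
  choose CS hCSpos hCS using hScf.2
  have key : ∀ N : ℕ, ∀ js : List (Fin n), js.length = N → ∃ C, 0 < C ∧
      ∀ x ∈ Rg n, ‖js.foldr pd T x‖ ≤ C * Sf m ε x ^ (-1 : ℝ) := by
    intro N
    induction N using Nat.strong_induction_on with
    | _ N ih =>
      intro js hlen
      match js, hlen with
      | [], hlen =>
          refine ⟨1, one_pos, fun x hx => ?_⟩
          have hSpos := Sf_pos hn hε hm2 hx
          simp only [List.foldr_nil, hT, one_mul]
          rw [Real.rpow_neg_one]
          have : ‖(Scf m ε x)⁻¹‖ = |Sf m ε x|⁻¹ := by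
            rw [norm_inv, Scf, Complex.norm_real, Real.norm_eq_abs]
          rw [this, abs_of_pos hSpos]
      | j :: t, hlen =>
          obtain ⟨r, hr, hr2⟩ := splits_head (n := n) (j :: t)
          set js := j :: t with hjs
          -- constant bound for the lower-order terms
          set G : List (Fin n) × List (Fin n) → ℝ := fun p =>
            (if hp : p.1.length < N then (ih p.1.length hp p.1 rfl).choose else 0) * CS p.2
            with hG
          refine ⟨max 1 ((r.map G).sum), lt_of_lt_of_le one_pos (le_max_left _ _),
            fun x hx => ?_⟩
          have hxU : x ∈ ({0}ᶜ : Set E) := Rg_subset hn hx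
          have hSpos := Sf_pos hn hε hm2 hx
          have hEq1 : Set.EqOn (fun y => T y * Scf m ε y) (fun _ => (1:ℂ))
              ({0}ᶜ : Set E) := fun y hy => inv_mul_cancel₀ (hne y hy)
          have h0 : js.foldr pd (fun y => T y * Scf m ε y) x =
              ((splits js).map fun p =>
                p.1.foldr pd T x * p.2.foldr pd (Scf m ε) x).sum :=
            foldr_pd_mul isOpen_compl_singleton hTsm hScf.1 js x hxU
          have h1 : js.foldr pd (fun y => T y * Scf m ε y) x = 0 := by
            rw [foldr_pd_congr_open isOpen_compl_singleton hEq1 js hxU,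
              foldr_pd_const 1 js (by simp [hjs])]
          rw [h1] at h0
          rw [hr, List.map_cons, List.sum_cons] at h0
          have h2 : js.foldr pd T x * Scf m ε x =
              -((r.map fun p => p.1.foldr pd T x * p.2.foldr pd (Scf m ε) x).sum) := by
            have : ([] : List (Fin n)).foldr pd (Scf m ε) x = Scf m ε x := rfl
            rw [← this]
            linear_combination -h0
          have hbd : ∀ p ∈ r,
              ‖p.1.foldr pd T x * p.2.foldr pd (Scf m ε) x‖ ≤ G p := by
            intro p hp
            have hplen : p.1.length < N := by
              have := splits_length js p (by rw [hr]; simp [hp])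
              have h2ne : p.2.length ≠ 0 := by
                simpa [List.length_eq_zero_iff] using hr2 p hp
              omega
            have hspec := (ih p.1.length hplen p.1 rfl).choose_spec
            have hb1 : ‖p.1.foldr pd T x‖ ≤
                (ih p.1.length hplen p.1 rfl).choose * Sf m ε x ^ (-1 : ℝ) :=
              hspec.2 x hx
            have hb2 : ‖p.2.foldr pd (Scf m ε) x‖ ≤ CS p.2 * Sf m ε x ^ (1 : ℝ) :=
              hCS p.2 x hx
            rw [norm_mul, hG]
            simp only [hplen, dif_pos]
            calc ‖p.1.foldr pd T x‖ * ‖p.2.foldr pd (Scf m ε) x‖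
                ≤ ((ih p.1.length hplen p.1 rfl).choose * Sf m ε x ^ (-1 : ℝ)) *
                  (CS p.2 * Sf m ε x ^ (1 : ℝ)) :=
                mul_le_mul hb1 hb2 (norm_nonneg _)
                  (mul_pos hspec.1 (Real.rpow_pos_of_pos hSpos _)).le
            _ = (ih p.1.length hplen p.1 rfl).choose * CS p.2 *
                  (Sf m ε x ^ (-1 : ℝ) * Sf m ε x ^ (1 : ℝ)) := by ring
            _ = (ih p.1.length hplen p.1 rfl).choose * CS p.2 := by
                rw [← Real.rpow_add hSpos]
                norm_num
          have h3 : ‖js.foldr pd T x‖ * Sf m ε x ≤ (r.map G).sum := by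
            have hSnorm : ‖Scf m ε x‖ = Sf m ε x := by
              rw [Scf, Complex.norm_real, Real.norm_eq_abs, abs_of_pos hSpos]
            calc ‖js.foldr pd T x‖ * Sf m ε x = ‖js.foldr pd T x * Scf m ε x‖ := by
                  rw [norm_mul, hSnorm]
            _ = ‖(r.map fun p => p.1.foldr pd T x * p.2.foldr pd (Scf m ε) x).sum‖ := by
                  rw [h2, norm_neg]
            _ ≤ (r.map G).sum := norm_list_sum_le _ _ _ hbd
          have h4 : ‖js.foldr pd T x‖ ≤ (r.map G).sum * Sf m ε x ^ (-1 : ℝ) := by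
            rw [Real.rpow_neg_one]
            rw [← le_div_iff₀ hSpos] at h3
            rwa [div_eq_mul_inv] at h3
          refine h4.trans (mul_le_mul_of_nonneg_right (le_max_right _ _)
            (Real.rpow_pos_of_pos hSpos _).le)
  intro js
  exact key js.length js rfl

end Den
end AdjAux

-- chunk 8 : the coefficient b as a symbol, constants
namespace AdjAux
variable {n : ℕ}
local notation "E" => EuclideanSpace ℝ (Fin n)

theorem SymS_const {m : Fin n → ℕ} {ε : Fin n → ℝ} (c : ℂ) (a : ℝ)
    (ha : 0 ≤ a) (hn : 1 ≤ n) (hε : ∀ j, ε j = 1 ∨ ε j = -1) (hm2 : ∀ j, 2 ≤ m j) :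
    SymS m ε a (fun _ => c) := by
  refine ⟨contDiffOn_const, fun js => ⟨‖c‖ + 1, by positivity, fun x hx => ?_⟩⟩
  have hS1 : 1 ≤ Sf m ε x := Sf_ge_one hn hε hm2 hx
  have hpow : 1 ≤ Sf m ε x ^ a := Real.one_le_rpow hS1 ha
  rcases List.eq_nil_or_concat js with rfl | ⟨t, j, rfl⟩
  · simp only [List.foldr_nil]
    nlinarith [norm_nonneg c]
  · rw [foldr_pd_const c _ (by simp)]
    simp only [Pi.zero_apply, norm_zero]
    have hS0 : (0:ℝ) ≤ Sf m ε x := le_trans zero_le_one hS1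
    exact mul_nonneg (by positivity) (Real.rpow_nonneg hS0 a)

section Bsym
variable {m : Fin n → ℕ} {ε : Fin n → ℝ} {b : Fin n → EuclideanSpace ℝ (Fin n) → ℝ}
variable (hn : 1 ≤ n) (hε : ∀ j, ε j = 1 ∨ ε j = -1) (hm2 : ∀ j, 2 ≤ m j)
variable (hb : ∀ j x, b j x =
      (ε j * (m j : ℝ) * x j ^ (m j - 1)) /
        (∑ k, (ε k * (m k : ℝ) * x k ^ (m k - 1)) ^ 2))

include hn hε hm2 hb in
theorem SymS_bC (j : Fin n) : SymS m ε (-(1/2) : ℝ) (fun y => ((b j y : ℝ) : ℂ)) := by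
  have heq : Set.EqOn
      (fun y => cmon j ((ε j * (m j : ℝ) : ℝ) : ℂ) (m j - 1) y * (Scf m ε y)⁻¹)
      (fun y => ((b j y : ℝ) : ℂ)) ({0}ᶜ : Set E) := by
    intro y _
    show cmon j ((ε j * (m j : ℝ) : ℝ) : ℂ) (m j - 1) y * (Scf m ε y)⁻¹ = ((b j y : ℝ) : ℂ)
    rw [hb j y]
    unfold cmon Scf Sf
    push_cast
    rw [div_eq_mul_inv]
  have hmul : SymS m ε ((1/2 : ℝ) + (-1 : ℝ))
      (fun y => cmon j ((ε j * (m j : ℝ) : ℝ) : ℂ) (m j - 1) y * (Scf m ε y)⁻¹) :=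
    SymS_mul hn hε hm2 (SymS_cmon hn hε hm2 j _ (le_refl _)) (SymS_inv_Scf hn hε hm2)
  have : ((1/2 : ℝ) + (-1 : ℝ)) = -(1/2 : ℝ) := by norm_num
  rw [this] at hmul
  exact SymS_congr hn hmul heq

end Bsym
end AdjAux

-- chunk 9a : multi-index bookkeeping
namespace AdjAux
variable {n : ℕ}
local notation "E" => EuclideanSpace ℝ (Fin n)

/-- The set of multi-indices of the `l`-th iterate. -/
def Aset (n l : ℕ) : Finset (Fin n → ℕ) :=
  (Finset.Iic (fun _ : Fin n => l)).filter (fun α => ∑ j, α j ≤ l)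

theorem mem_Aset {l : ℕ} {α : Fin n → ℕ} :
    α ∈ Aset n l ↔ (∀ i, α i ≤ l) ∧ ∑ j, α j ≤ l := by
  simp [Aset, Finset.mem_filter, Finset.mem_Iic, Pi.le_def]

theorem Aset_mono {l : ℕ} : Aset n l ⊆ Aset n (l + 1) := by
  intro α hα
  rw [mem_Aset] at hα ⊢
  exact ⟨fun i => (hα.1 i).trans (Nat.le_succ l), hα.2.trans (Nat.le_succ l)⟩

theorem Aset_zero : Aset n 0 = {fun _ => 0} := by
  ext α
  rw [mem_Aset, Finset.mem_singleton]
  constructor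
  · intro ⟨h1, _⟩
    funext i
    exact Nat.le_zero.mp (h1 i)
  · rintro rfl
    simp

/-- Add one to the `j`-th entry. -/
def dlt (j : Fin n) (α : Fin n → ℕ) : Fin n → ℕ := fun i => α i + if i = j then 1 else 0

/-- Subtract one from the `j`-th entry. -/
def sb1 (j : Fin n) (α : Fin n → ℕ) : Fin n → ℕ := fun i => α i - if i = j then 1 else 0

theorem sb1_dlt (j : Fin n) (α : Fin n → ℕ) : sb1 j (dlt j α) = α := by
  funext i
  unfold sb1 dlt
  rcases eq_or_ne i j with rfl | h
  · simp
  · simp [h]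

theorem dlt_sb1 {j : Fin n} {α : Fin n → ℕ} (h : α j ≠ 0) : dlt j (sb1 j α) = α := by
  funext i
  unfold sb1 dlt
  rcases eq_or_ne i j with rfl | hij
  · simp only [if_pos rfl]
    simp only [eq_self_iff_true, if_true]
    have := h
    omega
  · simp [hij]

theorem dlt_inj (j : Fin n) : Function.Injective (dlt j) := by
  intro a a' h
  have := congrArg (sb1 j) h
  rwa [sb1_dlt, sb1_dlt] at this

theorem dlt_j_ne (j : Fin n) (α : Fin n → ℕ) : dlt j α j ≠ 0 := by
  unfold dlt
  simp

theorem dlt_mem {l : ℕ} {α : Fin n → ℕ} (hα : α ∈ Aset n l) (j : Fin n) :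
    dlt j α ∈ Aset n (l + 1) := by
  rw [mem_Aset] at hα ⊢
  constructor
  · intro i
    unfold dlt
    rcases eq_or_ne i j with rfl | h
    · simp only [if_pos rfl]
      exact Nat.add_le_add (hα.1 i) (le_refl 1)
    · simp only [if_neg h, Nat.add_zero]
      exact (hα.1 i).trans (Nat.le_succ l)
  · unfold dlt
    rw [Finset.sum_add_distrib]
    have : (∑ i, if i = j then 1 else 0) = 1 := by
      rw [Finset.sum_ite_eq' Finset.univ j (fun _ => 1)]
      simp
    rw [this]
    exact Nat.add_le_add hα.2 (le_refl 1)

theorem mem_Aset_of_sb1 {l : ℕ} {α' : Fin n → ℕ} {j : Fin n} (h0 : α' j ≠ 0)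
    (h : sb1 j α' ∈ Aset n l) : α' ∈ (Aset n l).image (dlt j) := by
  rw [Finset.mem_image]
  exact ⟨sb1 j α', h, dlt_sb1 h0⟩

/-- The `λ`-free operator `M g = -Σ_j ∂_j (b_j g)`. -/
noncomputable def Mop (b : Fin n → EuclideanSpace ℝ (Fin n) → ℝ)
    (g : EuclideanSpace ℝ (Fin n) → ℂ) : EuclideanSpace ℝ (Fin n) → ℂ :=
  fun x => -∑ j, pd j (fun y => ((b j y : ℝ) : ℂ) * g y) x

theorem Mop_smooth {b : Fin n → EuclideanSpace ℝ (Fin n) → ℝ}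
    (hbsm : ∀ j, ContDiffOn ℝ (⊤ : ℕ∞) (fun y => ((b j y : ℝ) : ℂ)) ({0}ᶜ : Set E))
    {g : E → ℂ} (hg : ContDiffOn ℝ (⊤ : ℕ∞) g ({0}ᶜ : Set E)) :
    ContDiffOn ℝ (⊤ : ℕ∞) (Mop b g) ({0}ᶜ : Set E) := by
  unfold Mop
  have : ∀ j : Fin n, ContDiffOn ℝ (⊤ : ℕ∞) (fun x => pd j (fun y => ((b j y : ℝ) : ℂ) * g y) x)
      ({0}ᶜ : Set E) := fun j =>
    pd_smooth isOpen_compl_singleton ((hbsm j).mul hg) j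
  have hsum : ContDiffOn ℝ (⊤ : ℕ∞) (fun x => ∑ j, pd j (fun y => ((b j y : ℝ) : ℂ) * g y) x)
      ({0}ᶜ : Set E) := by
    classical
    induction (Finset.univ : Finset (Fin n)) using Finset.cons_induction with
    | empty => simpa using contDiffOn_const
    | cons i s his ih =>
        simp only [Finset.sum_cons]
        exact (this i).add ih
  exact hsum.neg

theorem iterate_Mop_smooth {b : Fin n → EuclideanSpace ℝ (Fin n) → ℝ}
    (hbsm : ∀ j, ContDiffOn ℝ (⊤ : ℕ∞) (fun y => ((b j y : ℝ) : ℂ)) ({0}ᶜ : Set E))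
    {g : E → ℂ} (hg : ContDiffOn ℝ (⊤ : ℕ∞) g ({0}ᶜ : Set E)) :
    ∀ l : ℕ, ContDiffOn ℝ (⊤ : ℕ∞) ((Mop b)^[l] g) ({0}ᶜ : Set E)
  | 0 => hg
  | l + 1 => by
      rw [Function.iterate_succ_apply']
      exact Mop_smooth hbsm (iterate_Mop_smooth hbsm hg l)

end AdjAux

-- chunk 9b : main coefficient construction
namespace AdjAux
variable {n : ℕ}
local notation "E" => EuclideanSpace ℝ (Fin n)

section Main
variable {m : Fin n → ℕ} {ε : Fin n → ℝ} {b : Fin n → EuclideanSpace ℝ (Fin n) → ℝ}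
variable (hn : 1 ≤ n) (hε : ∀ j, ε j = 1 ∨ ε j = -1) (hm2 : ∀ j, 2 ≤ m j)
variable (hb : ∀ j x, b j x = (ε j * (m j : ℝ) * x j ^ (m j - 1)) /
        (∑ k, (ε k * (m k : ℝ) * x k ^ (m k - 1)) ^ 2))

include hn hε hm2 hb in
theorem exists_e (l : ℕ) :
    ∃ e : (Fin n → ℕ) → EuclideanSpace ℝ (Fin n) → ℂ,
      (∀ α, SymS m ε (-(l : ℝ)/2) (e α)) ∧
      (∀ α, α ∉ Aset n l → e α = fun _ => 0) ∧
      (∀ f : EuclideanSpace ℝ (Fin n) → ℂ, ContDiffOn ℝ (⊤ : ℕ∞) f ({0}ᶜ : Set E) →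
        ∀ x ∈ ({0}ᶜ : Set E),
          (Mop b)^[l] f x = ∑ α ∈ Aset n l, e α x * mpd α f x) := by
  induction l with
  | zero =>
      refine ⟨fun α => if α = (fun _ => 0) then (fun _ => (1:ℂ)) else fun _ => 0, ?_, ?_, ?_⟩
      · intro α
        dsimp only
        by_cases hα : α = (fun _ => 0)
        · rw [if_pos hα]
          have h0 : (-((0:ℕ) : ℝ)/2) = 0 := by norm_num
          rw [h0]
          exact SymS_const 1 0 le_rfl hn hε hm2
        · rw [if_neg hα]
          exact SymS_zero_fun _
      · intro α hα
        dsimp only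
        rw [if_neg]
        intro hc
        rw [hc, Aset_zero] at hα
        simp at hα
      · intro f hf x hx
        rw [Function.iterate_zero_apply, Aset_zero, Finset.sum_singleton]
        dsimp only
        rw [if_pos rfl, mpd_zero, one_mul]
  | succ l IH =>
      obtain ⟨e, hSym, hvan, hrep⟩ := IH
      have hUo : IsOpen ({0}ᶜ : Set E) := isOpen_compl_singleton
      have hbCsm : ∀ j, ContDiffOn ℝ (⊤ : ℕ∞) (fun y => ((b j y : ℝ) : ℂ)) ({0}ᶜ : Set E) :=
        fun j => (SymS_bC hn hε hm2 hb j).1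
      set e' : (Fin n → ℕ) → EuclideanSpace ℝ (Fin n) → ℂ := fun α' =>
        if α' ∈ Aset n (l+1) then (fun z =>
          (-∑ j, pd j (fun y => ((b j y : ℝ) : ℂ) * e α' y) z) +
          (-∑ j, (if α' j ≠ 0 then (fun y => ((b j y : ℝ) : ℂ) * e (sb1 j α') y)
              else fun _ => 0) z)) else fun _ => 0 with he'
      have hexp : (-(1/2 : ℝ)) + (-(l : ℝ)/2) = -(((l+1 : ℕ)) : ℝ)/2 := by push_cast; ring
      have hterm : ∀ (β : Fin n → ℕ) (j : Fin n),
          SymS m ε (-(((l+1 : ℕ)) : ℝ)/2) (fun y => ((b j y : ℝ) : ℂ) * e β y) := by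
        intro β j
        rw [← hexp]
        exact SymS_mul hn hε hm2 (SymS_bC hn hε hm2 hb j) (hSym β)
      refine ⟨e', ?_, ?_, ?_⟩
      · intro α'
        simp only [he']
        by_cases hmem : α' ∈ Aset n (l+1)
        · rw [if_pos hmem]
          apply SymS_add hn
          · apply SymS_neg
            exact SymS_finset_sum Finset.univ
              (fun j => fun z => pd j (fun y => ((b j y : ℝ) : ℂ) * e α' y) z)
              (fun j _ => SymS_pd (hterm α' j) j) (SymS_zero_fun _)
              (fun hg hh => SymS_add hn hg hh)
          · apply SymS_neg
            apply SymS_finset_sum Finset.univ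
              (fun j => fun z => (if α' j ≠ 0 then (fun y => ((b j y : ℝ) : ℂ) * e (sb1 j α') y)
                else fun _ => 0) z)
              (fun j _ => ?_) (SymS_zero_fun _) (fun hg hh => SymS_add hn hg hh)
            by_cases h0 : α' j ≠ 0
            · rw [if_pos h0]
              exact hterm (sb1 j α') j
            · rw [if_neg h0]
              exact SymS_zero_fun _
        · rw [if_neg hmem]
          exact SymS_zero_fun _
      · intro α' hα'
        simp only [he']
        rw [if_neg hα']
      · intro f hf x hx
        have hml : Set.EqOn ((Mop b)^[l] f)
            (fun y => ∑ α ∈ Aset n l, e α y * mpd α f y) ({0}ᶜ : Set E) :=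
          fun y hy => hrep f hf y hy
        have hstep : (Mop b)^[l+1] f x
            = -∑ j, pd j (fun y => ((b j y : ℝ) : ℂ) * (Mop b)^[l] f y) x := by
          rw [show (Mop b)^[l+1] f = Mop b ((Mop b)^[l] f) from
            Function.iterate_succ_apply' (Mop b) l f]
          rfl
        have hsm3 : ∀ (α : Fin n → ℕ) (j : Fin n), ContDiffOn ℝ (⊤ : ℕ∞)
            (fun y => (((b j y : ℝ) : ℂ) * e α y) * mpd α f y) ({0}ᶜ : Set E) :=
          fun α j => ((hbCsm j).mul (hSym α).1).mul (mpd_smooth hUo hf α)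
        have hpd : ∀ j : Fin n, pd j (fun y => ((b j y : ℝ) : ℂ) * (Mop b)^[l] f y) x
            = ∑ α ∈ Aset n l, (pd j (fun y => ((b j y : ℝ) : ℂ) * e α y) x * mpd α f x
                + (((b j x : ℝ) : ℂ) * e α x) * mpd (dlt j α) f x) := by
          intro j
          have h1 : Set.EqOn (fun y => ((b j y : ℝ) : ℂ) * (Mop b)^[l] f y)
              (fun y => ∑ α ∈ Aset n l, (((b j y : ℝ) : ℂ) * e α y) * mpd α f y)
              ({0}ᶜ : Set E) := by
            intro y hy
            show ((b j y : ℝ) : ℂ) * (Mop b)^[l] f y = _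
            rw [hml hy, Finset.mul_sum]
            exact Finset.sum_congr rfl fun α _ => by ring
          rw [pd_congr_open hUo h1 j hx]
          rw [pd_finset_sum_at (Aset n l)
            (fun α y => (((b j y : ℝ) : ℂ) * e α y) * mpd α f y)
            (fun α _ => diffAt_of_smooth hUo (hsm3 α j) hx) j]
          apply Finset.sum_congr rfl
          intro α hα
          rw [pd_mul_at (diffAt_of_smooth hUo ((hbCsm j).mul (hSym α).1) hx)
            (diffAt_of_smooth hUo (mpd_smooth hUo hf α) hx) j]
          rw [pd_mpd hUo hf j α hx]
          rfl
        -- regrouping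
        have hT1 : -(∑ j : Fin n, ∑ α ∈ Aset n l,
              pd j (fun y => ((b j y : ℝ) : ℂ) * e α y) x * mpd α f x)
            = ∑ α ∈ Aset n l,
              (-∑ j, pd j (fun y => ((b j y : ℝ) : ℂ) * e α y) x) * mpd α f x := by
          rw [Finset.sum_comm, ← Finset.sum_neg_distrib]
          apply Finset.sum_congr rfl
          intro α _
          rw [← Finset.sum_mul, neg_mul]
        have hT2 : -(∑ j : Fin n, ∑ α ∈ Aset n l,
              (((b j x : ℝ) : ℂ) * e α x) * mpd (dlt j α) f x)
            = ∑ j : Fin n, ∑ α ∈ Aset n l,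
              (-(((b j x : ℝ) : ℂ) * e α x)) * mpd (dlt j α) f x := by
          rw [← Finset.sum_neg_distrib]
          apply Finset.sum_congr rfl
          intro j _
          rw [← Finset.sum_neg_distrib]
          apply Finset.sum_congr rfl
          intro α _
          rw [neg_mul]
        have claim1 : ∑ α' ∈ Aset n (l+1),
              (-∑ j, pd j (fun y => ((b j y : ℝ) : ℂ) * e α' y) x) * mpd α' f x
            = ∑ α ∈ Aset n l,
              (-∑ j, pd j (fun y => ((b j y : ℝ) : ℂ) * e α y) x) * mpd α f x := by
          symm
          apply Finset.sum_subset Aset_mono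
          intro α' _ hnot
          have hz := hvan α' hnot
          simp only [hz, mul_zero, pd_zero_fun, Finset.sum_const_zero, neg_zero, zero_mul]
        have hj : ∀ j : Fin n, ∑ α' ∈ Aset n (l+1),
              (-(if α' j ≠ 0 then (fun y => ((b j y : ℝ) : ℂ) * e (sb1 j α') y)
                else fun _ => 0) x) * mpd α' f x
            = ∑ α ∈ Aset n l, (-(((b j x : ℝ) : ℂ) * e α x)) * mpd (dlt j α) f x := by
          intro j
          have himgsub : (Aset n l).image (dlt j) ⊆ Aset n (l+1) := by
            intro α' hα'
            rw [Finset.mem_image] at hα'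
            obtain ⟨α, hα, rfl⟩ := hα'
            exact dlt_mem hα j
          have hzero : ∀ α' ∈ Aset n (l+1), α' ∉ (Aset n l).image (dlt j) →
              (-(if α' j ≠ 0 then (fun y => ((b j y : ℝ) : ℂ) * e (sb1 j α') y)
                else fun _ => 0) x) * mpd α' f x = 0 := by
            intro α' _ hnot
            by_cases h0 : α' j ≠ 0
            · have hsb : sb1 j α' ∉ Aset n l := by
                intro hc
                exact hnot (mem_Aset_of_sb1 h0 hc)
              rw [if_pos h0, hvan _ hsb]
              simp
            · rw [if_neg h0]
              simp
          rw [← Finset.sum_subset himgsub hzero]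
          rw [Finset.sum_image (fun a _ a' _ h => dlt_inj j h)]
          apply Finset.sum_congr rfl
          intro α hα
          rw [if_pos (dlt_j_ne j α), sb1_dlt]
        have claim2 : ∑ j : Fin n, ∑ α ∈ Aset n l,
              (-(((b j x : ℝ) : ℂ) * e α x)) * mpd (dlt j α) f x
            = ∑ α' ∈ Aset n (l+1),
              (-∑ j, (if α' j ≠ 0 then (fun y => ((b j y : ℝ) : ℂ) * e (sb1 j α') y)
                else fun _ => 0) x) * mpd α' f x := by
          rw [← Finset.sum_congr rfl (fun j (_ : j ∈ Finset.univ) => hj j), Finset.sum_comm]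
          apply Finset.sum_congr rfl
          intro α' _
          rw [← Finset.sum_neg_distrib, Finset.sum_mul]
        -- put everything together
        rw [hstep, Finset.sum_congr rfl (fun j (_ : j ∈ Finset.univ) => hpd j)]
        have hsplit : ∀ j : Fin n, ∑ α ∈ Aset n l,
            (pd j (fun y => ((b j y : ℝ) : ℂ) * e α y) x * mpd α f x
              + (((b j x : ℝ) : ℂ) * e α x) * mpd (dlt j α) f x)
            = (∑ α ∈ Aset n l, pd j (fun y => ((b j y : ℝ) : ℂ) * e α y) x * mpd α f x)
              + ∑ α ∈ Aset n l, (((b j x : ℝ) : ℂ) * e α x) * mpd (dlt j α) f x :=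
          fun j => Finset.sum_add_distrib
        rw [Finset.sum_congr rfl (fun j (_ : j ∈ Finset.univ) => hsplit j),
          Finset.sum_add_distrib, neg_add, hT1, hT2, ← claim1, claim2]
        rw [← Finset.sum_add_distrib]
        apply Finset.sum_congr rfl
        intro α' hα'
        simp only [he']
        rw [if_pos hα']
        ring
end Main
end AdjAux

-- chunk 10 : iterates of Lstar, lower bound for Sf
namespace AdjAux
variable {n : ℕ}
local notation "E" => EuclideanSpace ℝ (Fin n)

theorem Lstar_iterate {b : Fin n → EuclideanSpace ℝ (Fin n) → ℝ}
    (Lstar : ℝ → (EuclideanSpace ℝ (Fin n) → ℂ) → EuclideanSpace ℝ (Fin n) → ℂ) (lam : ℝ)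
    (hL : ∀ f x, Lstar lam f x =
      -∑ j, (Complex.I * lam)⁻¹ * pd j (fun y => ((b j y : ℝ) : ℂ) * f y) x) :
    ∀ (l : ℕ) (g : E → ℂ) (x : E),
      (Lstar lam)^[l] g x = ((Complex.I * lam)⁻¹) ^ l * (Mop b)^[l] g x
  | 0, g, x => by simp
  | l + 1, g, x => by
      rw [show (Lstar lam)^[l+1] g = Lstar lam ((Lstar lam)^[l] g) from
        Function.iterate_succ_apply' (Lstar lam) l g]
      rw [hL]
      have hIH : (Lstar lam)^[l] g
          = fun y => ((Complex.I * lam)⁻¹) ^ l * (Mop b)^[l] g y :=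
        funext fun y => Lstar_iterate Lstar lam hL l g y
      simp only [hIH]
      have hj : ∀ j : Fin n,
          pd j (fun y => ((b j y : ℝ) : ℂ) *
            (((Complex.I * lam)⁻¹) ^ l * (Mop b)^[l] g y)) x
          = ((Complex.I * lam)⁻¹) ^ l *
            pd j (fun y => ((b j y : ℝ) : ℂ) * (Mop b)^[l] g y) x := by
        intro j
        have heq : (fun y => ((b j y : ℝ) : ℂ) *
            (((Complex.I * lam)⁻¹) ^ l * (Mop b)^[l] g y))
            = fun y => ((Complex.I * lam)⁻¹) ^ l *
              (((b j y : ℝ) : ℂ) * (Mop b)^[l] g y) := funext fun y => by ring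
        rw [heq, pd_const_mul]
      calc -∑ j, (Complex.I * lam)⁻¹ * pd j (fun y => ((b j y : ℝ) : ℂ) *
            (((Complex.I * lam)⁻¹) ^ l * (Mop b)^[l] g y)) x
          = -∑ j, ((Complex.I * lam)⁻¹) ^ (l+1) *
            pd j (fun y => ((b j y : ℝ) : ℂ) * (Mop b)^[l] g y) x := by
            apply congrArg Neg.neg
            apply Finset.sum_congr rfl
            intro j _
            rw [hj j]
            ring
        _ = ((Complex.I * lam)⁻¹) ^ (l+1) *
            (-∑ j, pd j (fun y => ((b j y : ℝ) : ℂ) * (Mop b)^[l] g y) x) := by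
            rw [← Finset.mul_sum, ← mul_neg]
        _ = ((Complex.I * lam)⁻¹) ^ (l+1) * (Mop b)^[l+1] g x := by
            rw [show (Mop b)^[l+1] g = Mop b ((Mop b)^[l] g) from
              Function.iterate_succ_apply' (Mop b) l g]
            rfl

section Lower
variable {m : Fin n → ℕ} {ε : Fin n → ℝ} {μ : ℕ}
variable (hn : 1 ≤ n) (hε : ∀ j, ε j = 1 ∨ ε j = -1)
variable (hμ2 : 2 ≤ μ) (hμle : ∀ j, μ ≤ m j)

include hn hε hμ2 hμle in
theorem Sf_lower {x : E} (hx : x ∈ Rg n) :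
    ‖x‖ ^ (2 * (μ - 1)) / (n : ℝ) ^ (μ - 2) ≤ Sf m ε x := by
  have hterm : ∀ k : Fin n, (x k ^ 2) ^ (μ - 1) ≤ (ε k * (m k : ℝ) * x k ^ (m k - 1)) ^ 2 := by
    intro k
    have hm2 : 2 ≤ m k := le_trans hμ2 (hμle k)
    have hε2 : (ε k) ^ 2 = 1 := by rcases hε k with h | h <;> simp [h]
    have h1 : (x k ^ 2) ^ (μ - 1) ≤ (x k ^ 2) ^ (m k - 1) := by
      apply pow_le_pow_right₀ ?_ (by have := hμle k; omega)
      nlinarith [hx k, abs_nonneg (x k), sq_abs (x k)]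
    have h2 : (x k ^ 2) ^ (m k - 1) = (x k ^ (m k - 1)) ^ 2 := by
      rw [← pow_mul, ← pow_mul, Nat.mul_comm]
    have h3 : (x k ^ (m k - 1)) ^ 2 ≤ (ε k * (m k : ℝ) * x k ^ (m k - 1)) ^ 2 := by
      have hmge : (1:ℝ) ≤ (m k : ℝ) ^ 2 := by
        have : (2:ℝ) ≤ (m k : ℝ) := by exact_mod_cast hm2
        nlinarith
      have hexp : (ε k * (m k : ℝ) * x k ^ (m k - 1)) ^ 2
          = (ε k)^2 * ((m k : ℝ))^2 * (x k ^ (m k - 1))^2 := by ring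
      rw [hexp, hε2]
      nlinarith [sq_nonneg (x k ^ (m k - 1))]
    calc (x k ^ 2) ^ (μ - 1) ≤ (x k ^ 2) ^ (m k - 1) := h1
    _ = (x k ^ (m k - 1)) ^ 2 := h2
    _ ≤ _ := h3
  have hsum : ∑ k, (x k ^ 2) ^ (μ - 1) ≤ Sf m ε x :=
    Finset.sum_le_sum fun k _ => hterm k
  have hjensen : (∑ k, x k ^ 2) ^ (μ - 1) / (n : ℝ) ^ (μ - 2) ≤ ∑ k, (x k ^ 2) ^ (μ - 1) := by
    have := pow_sum_div_card_le_sum_pow (s := Finset.univ)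
      (f := fun k : Fin n => x k ^ 2) (fun k _ => sq_nonneg _) (μ - 2)
    have hμ : μ - 2 + 1 = μ - 1 := by omega
    rw [hμ] at this
    simpa using this
  have hnorm : ∑ k, x k ^ 2 = ‖x‖ ^ 2 := by
    rw [EuclideanSpace.norm_eq]
    rw [Real.sq_sqrt (by positivity)]
    apply Finset.sum_congr rfl
    intro k _
    rw [Real.norm_eq_abs, sq_abs]
  calc ‖x‖ ^ (2 * (μ - 1)) / (n : ℝ) ^ (μ - 2)
      = (∑ k, x k ^ 2) ^ (μ - 1) / (n : ℝ) ^ (μ - 2) := by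
        rw [hnorm, ← pow_mul]
  _ ≤ ∑ k, (x k ^ 2) ^ (μ - 1) := hjensen
  _ ≤ Sf m ε x := hsum

end Lower
end AdjAux

open AdjAux in
/-- writing the `l`-fold iterate of the formal adjoint
`L* = -Σ_j (iλ)⁻¹ ∂_{x_j} ∘ b_j` as `(L*)^l f = Σ_{|α| ≤ l} d_{l,α} (λ⁻¹ i⁻¹ ∂)^α f`,
the coefficients `d_{l,α}` are smooth on `ℝⁿ ∖ {0}` and satisfy
`|∂_x^β d_{l,α}(x)| ≤ C_{l,β} λ^{-(l-|α|)} |x|^{-(μ-1)l}` on `{|x_k| ≥ 1 ∀k}`,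
with constants independent of `λ > 0`. -/
theorem adjoint_iterate_coefficient_bounds
    (n : ℕ) (hn : 1 ≤ n) (m : Fin n → ℕ) (ε : Fin n → ℝ) (hε : ∀ j, ε j = 1 ∨ ε j = -1)
    (μ : ℕ) (hμ2 : 2 ≤ μ) (hμle : ∀ j, μ ≤ m j) (hμmem : ∃ j, m j = μ)
    (b : Fin n → EuclideanSpace ℝ (Fin n) → ℝ)
    (hb : ∀ j x, b j x =
      (ε j * (m j : ℝ) * x j ^ (m j - 1)) /
        (∑ k, (ε k * (m k : ℝ) * x k ^ (m k - 1)) ^ 2))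
    (Lstar : ℝ → (EuclideanSpace ℝ (Fin n) → ℂ) → EuclideanSpace ℝ (Fin n) → ℂ)
    (hL : ∀ lam f x, Lstar lam f x =
      -∑ j, (Complex.I * lam)⁻¹ * pd j (fun y => (b j y : ℂ) * f y) x)
    (l : ℕ) :
    ∃ d : ℝ → (Fin n → ℕ) → EuclideanSpace ℝ (Fin n) → ℂ,
      (∀ lam : ℝ, 0 < lam →
        (∀ f : EuclideanSpace ℝ (Fin n) → ℂ,
          ContDiffOn ℝ (⊤ : ℕ∞) f ({0}ᶜ : Set (EuclideanSpace ℝ (Fin n))) →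
          ∀ x : EuclideanSpace ℝ (Fin n), x ≠ 0 →
            (Lstar lam)^[l] f x =
              ∑ α ∈ (Finset.Iic (fun _ : Fin n => l)).filter (fun α => ∑ j, α j ≤ l),
                d lam α x * (((Complex.I * lam)⁻¹) ^ (∑ j, α j) * mpd α f x)) ∧
        (∀ α ∈ (Finset.Iic (fun _ : Fin n => l)).filter (fun α => ∑ j, α j ≤ l),
          ContDiffOn ℝ (⊤ : ℕ∞) (d lam α) ({0}ᶜ : Set (EuclideanSpace ℝ (Fin n))))) ∧
      (∀ α ∈ (Finset.Iic (fun _ : Fin n => l)).filter (fun α => ∑ j, α j ≤ l),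
        ∀ β : Fin n → ℕ, ∃ C : ℝ, 0 < C ∧
          ∀ lam : ℝ, 0 < lam →
            ∀ x : EuclideanSpace ℝ (Fin n), (∀ k, 1 ≤ |x k|) →
              ‖mpd β (d lam α) x‖ ≤
                C * lam ^ (-((l : ℝ) - (∑ j, α j : ℕ))) *
                  ‖x‖ ^ (-((μ : ℝ) - 1) * l)) := by
  have hm2 : ∀ j, 2 ≤ m j := fun j => le_trans hμ2 (hμle j)
  obtain ⟨e, hSym, hvan, hrep⟩ := exists_e hn hε hm2 hb l
  have hAset : (Finset.Iic (fun _ : Fin n => l)).filter (fun α => ∑ j, α j ≤ l)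
      = Aset n l := rfl
  refine ⟨fun lam α => fun x => ((Complex.I * lam)⁻¹) ^ (l - ∑ j, α j) * e α x, ?_, ?_⟩
  · intro lam hlam
    constructor
    · intro f hf x hx
      have hx' : x ∈ ({0}ᶜ : Set (EuclideanSpace ℝ (Fin n))) := by simpa using hx
      have hL' : ∀ f x, Lstar lam f x =
          -∑ j, (Complex.I * lam)⁻¹ * pd j (fun y => ((b j y : ℝ) : ℂ) * f y) x :=
        fun f x => hL lam f x
      rw [Lstar_iterate Lstar lam hL' l f x, hrep f hf x hx', hAset, Finset.mul_sum]
      apply Finset.sum_congr rfl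
      intro α hα
      have hle : ∑ j, α j ≤ l := (mem_Aset.mp hα).2
      have hc : ((Complex.I * lam)⁻¹) ^ (l - ∑ j, α j) * ((Complex.I * lam)⁻¹) ^ (∑ j, α j)
          = ((Complex.I * lam)⁻¹) ^ l := by
        rw [← pow_add, Nat.sub_add_cancel hle]
      rw [← hc]
      ring
    · intro α hα
      exact contDiffOn_const.mul (hSym α).1
  · intro α hα β
    obtain ⟨Cβ, hCβpos, hCβ⟩ :=
      (hSym α).2 ((List.finRange n).flatMap fun j => List.replicate (β j) j)
    have hN : (0:ℝ) < (n : ℝ) ^ (μ - 2) := by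
      have : (0:ℝ) < (n : ℝ) := by exact_mod_cast hn
      positivity
    set K : ℝ := (((n : ℝ) ^ (μ - 2))⁻¹) with hK
    have hKpos : 0 < K := by rw [hK]; positivity
    refine ⟨Cβ * K ^ (-(l : ℝ)/2), by positivity, ?_⟩
    intro lam hlam x hx
    have hxR : x ∈ Rg n := hx
    have hx0 : x ≠ 0 := Rg_subset hn hxR
    have hxn : (0:ℝ) < ‖x‖ := norm_pos_iff.mpr hx0
    have hSpos : 0 < Sf m ε x := Sf_pos hn hε hm2 hxR
    have hle : ∑ j, α j ≤ l := by
      rw [hAset] at hα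
      exact (mem_Aset.mp hα).2
    -- pull out the constant
    rw [mpd_const_mul, norm_mul]
    have hcK : ‖((Complex.I * (lam:ℂ))⁻¹) ^ (l - ∑ j, α j)‖
        = lam ^ (-((l : ℝ) - (∑ j, α j : ℕ))) := by
      rw [norm_pow, norm_inv, norm_mul, Complex.norm_I, Complex.norm_real,
        Real.norm_eq_abs, abs_of_pos hlam, one_mul]
      rw [inv_pow, ← Real.rpow_natCast lam (l - ∑ j, α j), ← Real.rpow_neg hlam.le]
      congr 1
      rw [Nat.cast_sub hle]
    rw [hcK]
    -- bound the derivative of the coefficient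
    have hmb : mpd β (e α) = ((List.finRange n).flatMap fun j =>
        List.replicate (β j) j).foldr pd (e α) := by
      rw [mpd_eq_mpdL, mpdL_eq_foldr]
    have hbd1 : ‖mpd β (e α) x‖ ≤ Cβ * Sf m ε x ^ (-(l : ℝ)/2) := by
      rw [hmb]
      exact hCβ x hxR
    -- lower bound for Sf
    have hlow : ‖x‖ ^ (2 * (μ - 1)) * K ≤ Sf m ε x := by
      have := Sf_lower hn hε hμ2 hμle hxR
      rwa [div_eq_mul_inv] at this
    have hXpos : (0:ℝ) < ‖x‖ ^ (2 * (μ - 1)) * K := by positivity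
    have hrp : Sf m ε x ^ (-(l : ℝ)/2) ≤ (‖x‖ ^ (2 * (μ - 1)) * K) ^ (-(l : ℝ)/2) := by
      apply Real.rpow_le_rpow_of_nonpos hXpos hlow
      have h2 : (0:ℝ) ≤ (l : ℝ)/2 := by positivity
      linarith
    have hsplit : (‖x‖ ^ (2 * (μ - 1)) * K) ^ (-(l : ℝ)/2)
        = ‖x‖ ^ (-((μ : ℝ) - 1) * l) * K ^ (-(l : ℝ)/2) := by
      rw [Real.mul_rpow (by positivity) hKpos.le]
      congr 1
      rw [← Real.rpow_natCast ‖x‖ (2 * (μ - 1)), ← Real.rpow_mul (norm_nonneg x)]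
      congr 1
      have h1 : ((2 * (μ - 1) : ℕ) : ℝ) = 2 * ((μ : ℝ) - 1) := by
        push_cast [Nat.cast_sub (le_trans one_le_two hμ2)]
        ring
      rw [h1]
      ring
    -- combine
    calc lam ^ (-((l : ℝ) - (∑ j, α j : ℕ))) * ‖mpd β (e α) x‖
        ≤ lam ^ (-((l : ℝ) - (∑ j, α j : ℕ))) * (Cβ * Sf m ε x ^ (-(l : ℝ)/2)) :=
          mul_le_mul_of_nonneg_left hbd1 (Real.rpow_nonneg hlam.le _)
      _ ≤ lam ^ (-((l : ℝ) - (∑ j, α j : ℕ))) *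
          (Cβ * (‖x‖ ^ (-((μ : ℝ) - 1) * l) * K ^ (-(l : ℝ)/2))) := by
          apply mul_le_mul_of_nonneg_left ?_ (Real.rpow_nonneg hlam.le _)
          apply mul_le_mul_of_nonneg_left ?_ hCβpos.le
          rw [← hsplit]
          exact hrp
      _ = Cβ * K ^ (-(l : ℝ)/2) * lam ^ (-((l : ℝ) - (∑ j, α j : ℕ))) *
          ‖x‖ ^ (-((μ : ℝ) - 1) * l) := by ring
end
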